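/- arXiv:2107.01342 — 7 statements merged into one kernel-verified Lean document; each statement's English description precedes it below -/
import Mathlib

section
/- In the real line with the standard metric, any Besicovitch family of closed intervals has cardinality at most 2. That is, if a finite collection of closed balls B(x_i, r_i) in ℝ has a common point, and for every pair of distinct indices i ≠ j we have x_j ∉ B(x_i, r_i) and x_i ∉ B(x_j, r_j), then the collection contains at most 2 balls. -/
open Metric

/-- Any Besicovitch family of closed intervals in ℝ has cardinality at most 2. -/
theorem besicovitch_family_real_card_le_two
    (k : ℕ) (x r : Fin k → ℝ) (y : ℝ)
    (hy : ∀ i, y ∈ closedBall (x i) (r i))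
    (hsep : ∀ i j, i ≠ j → x j ∉ closedBall (x i) (r i)) :
    k ≤ 2 := by
  by_contra hk
  push_neg at hk
  -- key lemma: no middle center
  have key : ∀ a b c : Fin k, a ≠ b → c ≠ b → x a < x b → x b < x c → False := by
    intro a b c hab hcb hab' hbc'
    have h1 : dist y (x a) ≤ r a := hy a
    have h2 : dist y (x c) ≤ r c := hy c
    have h3 : ¬ dist (x b) (x a) ≤ r a := hsep a b hab
    have h4 : ¬ dist (x b) (x c) ≤ r c := hsep c b hcb
    rw [Real.dist_eq] at h1 h2 h3 h4
    push_neg at h3 h4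
    have e1 : |x b - x a| = x b - x a := abs_of_pos (by linarith)
    have e2 : |x b - x c| = x c - x b := by
      rw [abs_sub_comm]; exact abs_of_pos (by linarith)
    have A := abs_lt.mp (show |y - x a| < x b - x a by rw [← e1]; exact lt_of_le_of_lt h1 h3)
    have B := abs_lt.mp (show |y - x c| < x c - x b by rw [← e2]; exact lt_of_le_of_lt h2 h4)
    linarith [A.2, B.1]
  set a : Fin k := ⟨0, by omega⟩
  set b : Fin k := ⟨1, by omega⟩
  set c : Fin k := ⟨2, by omega⟩
  have hab : a ≠ b := by simp [a, b, Fin.ext_iff]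
  have hac : a ≠ c := by simp [a, c, Fin.ext_iff]
  have hbc : b ≠ c := by simp [b, c, Fin.ext_iff]
  have hne : ∀ i j : Fin k, i ≠ j → x i ≠ x j := by
    intro i j hij heq
    have h1 : dist y (x i) ≤ r i := hy i
    have h2 : ¬ dist (x j) (x i) ≤ r i := hsep i j hij
    rw [heq, dist_self] at h2
    exact h2 (le_trans dist_nonneg h1)
  rcases lt_or_gt_of_ne (hne a b hab) with h1 | h1 <;>
  rcases lt_or_gt_of_ne (hne a c hac) with h2 | h2 <;>
  rcases lt_or_gt_of_ne (hne b c hbc) with h3 | h3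
  · exact key a b c hab hbc.symm h1 h3
  · exact key a c b hac hbc h2 h3
  · linarith
  · exact key c a b hac.symm hab.symm h2 h1
  · exact key b a c hab.symm hac.symm h1 h2
  · linarith
  · exact key b c a hbc hac h3 h2
  · exact key c b a hbc.symm hab h3 h1
end

section
/- Besicovitch covering theorem on ℝ: Let A ⊆ ℝ be an arbitrary subset and R > 0. Suppose that to each point x ∈ A is assigned a radius r(x) with 0 < r(x) ≤ R, giving a collection F of closed intervals [x - r(x), x + r(x)] for x ∈ A. Then there exist two subcollections F₁ and F₂ of F, each consisting of pairwise disjoint intervals, such that A is contained in the union of all intervals of F₁ ∪ F₂. -/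
open Metric Set

noncomputable section

namespace Besi

/-! ### Basic interval lemmas -/

lemma mem_cb {p c ρ : ℝ} : p ∈ closedBall c ρ ↔ c - ρ ≤ p ∧ p ≤ c + ρ := by
  rw [mem_closedBall, Real.dist_eq, abs_le]
  constructor <;> rintro ⟨h1, h2⟩ <;> constructor <;> linarith

/-- Characterization of intersecting closed balls on ℝ via endpoints. -/
lemma inter_nonempty_iff {x y rx ry : ℝ} (hx : 0 ≤ rx) (hy : 0 ≤ ry) :
    (closedBall x rx ∩ closedBall y ry).Nonempty ↔ y - ry ≤ x + rx ∧ x - rx ≤ y + ry := by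
  constructor
  · rintro ⟨p, hp1, hp2⟩
    rw [mem_cb] at hp1 hp2
    exact ⟨by linarith [hp1.2, hp2.1], by linarith [hp1.1, hp2.2]⟩
  · rintro ⟨h1, h2⟩
    refine ⟨max (x - rx) (y - ry), ?_, ?_⟩ <;> rw [mem_cb]
    · exact ⟨le_max_left _ _, max_le (by linarith) h1⟩
    · exact ⟨le_max_right _ _, max_le h2 (by linarith)⟩

lemma not_disjoint_iff_endpoints {x y rx ry : ℝ} (hx : 0 ≤ rx) (hy : 0 ≤ ry) :
    ¬ Disjoint (closedBall x rx) (closedBall y ry) ↔ y - ry ≤ x + rx ∧ x - rx ≤ y + ry := by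
  rw [Set.not_disjoint_iff_nonempty_inter, inter_nonempty_iff hx hy]

lemma sub_cover {cI rI cM rM cK rK : ℝ}
    (h1 : cI - rI ≤ cM - rM) (h2 : cM + rM ≤ cK + rK) (h3 : cK - rK ≤ cI + rI) :
    closedBall cM rM ⊆ closedBall cI rI ∪ closedBall cK rK := by
  intro p hp
  rw [mem_cb] at hp
  rcases le_total p (cI + rI) with h | h
  · left; rw [mem_cb]; exact ⟨le_trans h1 hp.1, h⟩
  · right; rw [mem_cb]; exact ⟨le_trans h3 h, le_trans hp.2 h2⟩

/-- Among three mutually intersecting closed intervals, one is contained in the union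
of the other two. -/
lemma tri {a b c ra rb rc : ℝ}
    (hab : b - rb ≤ a + ra ∧ a - ra ≤ b + rb)
    (hac : c - rc ≤ a + ra ∧ a - ra ≤ c + rc)
    (hbc : c - rc ≤ b + rb ∧ b - rb ≤ c + rc) :
    closedBall a ra ⊆ closedBall b rb ∪ closedBall c rc ∨
    closedBall b rb ⊆ closedBall a ra ∪ closedBall c rc ∨
    closedBall c rc ⊆ closedBall a ra ∪ closedBall b rb := by
  rcases le_total (a - ra) (b - rb) with h1 | h1
  · rcases le_total (a - ra) (c - rc) with h2 | h2
    · -- a has min left endpoint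
      rcases le_total (b + rb) (c + rc) with h3 | h3
      · exact Or.inr (Or.inl (sub_cover h1 h3 hac.1))
      · exact Or.inr (Or.inr (sub_cover h2 h3 hab.1))
    · -- c has min left endpoint (c ≤ a ≤ b)
      rcases le_total (a + ra) (b + rb) with h3 | h3
      · exact Or.inl (by rw [Set.union_comm]; exact sub_cover h2 h3 hbc.2)
      · exact Or.inr (Or.inl (by rw [Set.union_comm]; exact sub_cover (le_trans h2 h1) h3 hac.2))
  · rcases le_total (b - rb) (c - rc) with h2 | h2
    · -- b has min left endpoint
      rcases le_total (a + ra) (c + rc) with h3 | h3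
      · exact Or.inl (sub_cover h1 h3 hbc.1)
      · exact Or.inr (Or.inr (by rw [Set.union_comm]; exact sub_cover h2 h3 hab.2))
    · -- c has min left endpoint (c ≤ b ≤ a)
      rcases le_total (a + ra) (b + rb) with h3 | h3
      · exact Or.inl (by rw [Set.union_comm]; exact sub_cover (le_trans h2 h1) h3 hbc.2)
      · exact Or.inr (Or.inl (by rw [Set.union_comm]; exact sub_cover h2 h3 hac.2))

/-! ### The layered selection G -/

/-- A maximal `δ`-separated subset of `V`, together with its covering property. -/
lemma exists_maxSep (δ : ℝ) (V : Set ℝ) :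
    ∃ M : Set ℝ, M ⊆ V ∧ (M.Pairwise fun x y => δ < |x - y|) ∧
      ∀ a ∈ V, a ∉ M → ∃ g ∈ M, |a - g| ≤ δ := by
  have hchainub : ∀ c ⊆ {M : Set ℝ | M ⊆ V ∧ M.Pairwise fun x y => δ < |x - y|},
      IsChain (· ⊆ ·) c → ∃ ub ∈ {M : Set ℝ | M ⊆ V ∧ M.Pairwise fun x y => δ < |x - y|},
        ∀ s ∈ c, s ⊆ ub := by
    intro c hc hchain
    refine ⟨⋃₀ c, ⟨Set.sUnion_subset fun s hs => (hc hs).1, ?_⟩,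
      fun s hs => Set.subset_sUnion_of_mem hs⟩
    intro x hx y hy hxy
    obtain ⟨s, hs, hxs⟩ := hx
    obtain ⟨t, ht, hyt⟩ := hy
    rcases hchain.total hs ht with h | h
    · exact (hc ht).2 (h hxs) hyt hxy
    · exact (hc hs).2 hxs (h hyt) hxy
  obtain ⟨M, hM⟩ := zorn_subset
      {M : Set ℝ | M ⊆ V ∧ M.Pairwise fun x y => δ < |x - y|} hchainub
  · obtain ⟨⟨hMV, hMsep⟩, hMmax⟩ := hM
    refine ⟨M, hMV, hMsep, ?_⟩
    intro a haV haM
    by_contra hcon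
    push_neg at hcon
    have hins : insert a M ∈ {M : Set ℝ | M ⊆ V ∧ M.Pairwise fun x y => δ < |x - y|} := by
      refine ⟨insert_subset haV hMV, ?_⟩
      rw [Set.pairwise_insert]
      refine ⟨hMsep, fun b hb hab => ?_⟩
      refine ⟨hcon b hb, ?_⟩
      rw [abs_sub_comm]
      exact hcon b hb
    have := hMmax hins (Set.subset_insert a M)
    exact haM (this (Set.mem_insert a M))

variable (A : Set ℝ) (R : ℝ) (r : ℝ → ℝ)

/-- Layer `n` : the points of `A` with radius in `(R/2^(n+1), R/2^n]`. -/
def layer (n : ℕ) : Set ℝ := {x | x ∈ A ∧ R / 2 ^ (n + 1) < r x ∧ r x ≤ R / 2 ^ n}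

/-- Choice of maximal separated subset of the uncovered part of a layer. -/
def pick (n : ℕ) (prev : Set ℝ) : Set ℝ :=
  (exists_maxSep (R / 2 ^ (n + 1)) (layer A R r n \ prev)).choose

lemma pick_spec (n : ℕ) (prev : Set ℝ) :
    pick A R r n prev ⊆ layer A R r n \ prev ∧
    ((pick A R r n prev).Pairwise fun x y => R / 2 ^ (n + 1) < |x - y|) ∧
    ∀ a ∈ layer A R r n \ prev, a ∉ pick A R r n prev →
      ∃ g ∈ pick A R r n prev, |a - g| ≤ R / 2 ^ (n + 1) :=
  (exists_maxSep (R / 2 ^ (n + 1)) (layer A R r n \ prev)).choose_spec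

/-- Region covered by the selections of layers `< n`. -/
def cov : ℕ → Set ℝ
  | 0 => ∅
  | n + 1 => cov n ∪ ⋃ g ∈ pick A R r n (cov n), closedBall g (r g)

/-- The selection at layer `n`. -/
def sel (n : ℕ) : Set ℝ := pick A R r n (cov A R r n)

/-- The full selected subfamily. -/
def GG : Set ℝ := ⋃ n, sel A R r n

lemma sel_subset (n : ℕ) : sel A R r n ⊆ layer A R r n \ cov A R r n :=
  (pick_spec A R r n (cov A R r n)).1

lemma sel_layer (n : ℕ) : sel A R r n ⊆ layer A R r n :=
  fun x hx => ((sel_subset A R r n) hx).1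

lemma GG_subset_A : GG A R r ⊆ A := by
  intro x hx
  obtain ⟨n, hn⟩ := Set.mem_iUnion.1 hx
  exact (sel_layer A R r n hn).1

lemma cov_mono : Monotone (cov A R r) := by
  apply monotone_nat_of_le_succ
  intro n
  rw [cov]
  exact Set.subset_union_left

lemma ball_subset_cov {n m : ℕ} (h : n < m) {g : ℝ} (hg : g ∈ sel A R r n) :
    closedBall g (r g) ⊆ cov A R r m := by
  have h1 : closedBall g (r g) ⊆ cov A R r (n + 1) := by
    rw [cov]
    exact subset_union_of_subset_right
      (Set.subset_biUnion_of_mem (u := fun g => closedBall g (r g)) hg) _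
  exact h1.trans (cov_mono A R r h)

lemma mem_cov_iff {x : ℝ} {n : ℕ} :
    x ∈ cov A R r n ↔ ∃ m < n, ∃ g ∈ sel A R r m, x ∈ closedBall g (r g) := by
  induction n with
  | zero => simp [cov]
  | succ n ih =>
    rw [cov]
    simp only [Set.mem_union, ih, Set.mem_iUnion]
    constructor
    · rintro (⟨m, hm, hg⟩ | ⟨g, hg, hx⟩)
      · exact ⟨m, Nat.lt_succ_of_lt hm, hg⟩
      · exact ⟨n, Nat.lt_succ_self n, g, hg, hx⟩
    · rintro ⟨m, hm, g, hg, hx⟩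
      rcases Nat.lt_succ_iff_lt_or_eq.1 hm with h | h
      · exact Or.inl ⟨m, h, g, hg, hx⟩
      · exact Or.inr ⟨g, h ▸ hg, hx⟩

/-! ### Covering and multiplicity -/

lemma layer_exists (hR : 0 < R) {a : ℝ} (ha : a ∈ A) (h0 : 0 < r a) (h1 : r a ≤ R) :
    ∃ n, a ∈ layer A R r n := by
  have hex : ∃ n : ℕ, R / 2 ^ (n + 1) < r a := by
    obtain ⟨n, hn⟩ := pow_unbounded_of_one_lt (R / r a) one_lt_two
    refine ⟨n, ?_⟩
    rw [div_lt_iff₀ (by positivity)] at hn ⊢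
    have h2 : (2:ℝ) ^ n < 2 ^ (n+1) := by
      apply pow_lt_pow_right₀ one_lt_two (Nat.lt_succ_self n)
    nlinarith
  classical
  set k := Nat.find hex with hk
  have hk1 : R / 2 ^ (k + 1) < r a := Nat.find_spec hex
  refine ⟨k, ha, hk1, ?_⟩
  rcases Nat.eq_zero_or_pos k with h | h
  · rw [h]; simpa using h1
  · obtain ⟨j, hj⟩ := Nat.exists_eq_add_of_lt h
    have hkj : k = j + 1 := by omega
    have := Nat.find_min hex (m := j) (by omega)
    push_neg at this
    rw [hkj]
    exact this

lemma GG_covers (hR : 0 < R) (hr : ∀ x ∈ A, 0 < r x ∧ r x ≤ R) {a : ℝ} (ha : a ∈ A) :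
    ∃ g ∈ GG A R r, a ∈ closedBall g (r g) := by
  obtain ⟨n, hn⟩ := layer_exists A R r hR ha (hr a ha).1 (hr a ha).2
  by_cases hc : a ∈ cov A R r n
  · obtain ⟨m, _, g, hg, hx⟩ := (mem_cov_iff A R r).1 hc
    exact ⟨g, Set.mem_iUnion.2 ⟨m, hg⟩, hx⟩
  · by_cases hs : a ∈ sel A R r n
    · refine ⟨a, Set.mem_iUnion.2 ⟨n, hs⟩, ?_⟩
      exact mem_closedBall_self (le_of_lt (hr a ha).1)
    · obtain ⟨g, hg, hd⟩ := (pick_spec A R r n (cov A R r n)).2.2 a ⟨hn, hc⟩ hs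
      refine ⟨g, Set.mem_iUnion.2 ⟨n, hg⟩, ?_⟩
      have hgl : g ∈ layer A R r n := sel_layer A R r n hg
      rw [mem_closedBall, Real.dist_eq]
      exact le_of_lt (lt_of_le_of_lt hd hgl.2.1)

/-- Key separation estimate: if the center `v` lies in the ball of `u`, then `v` was
selected in an earlier (or equal) layer and the separation is at least the `u`-scale. -/
lemma sep_of_mem {u v : ℝ} {n m : ℕ} (hR : 0 < R)
    (hu : u ∈ sel A R r n) (hv : v ∈ sel A R r m)
    (hmem : v ∈ closedBall u (r u)) (hne : v ≠ u) :
    m ≤ n ∧ R / 2 ^ (n + 1) < |u - v| := by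
  have hlayu : u ∈ layer A R r n := sel_layer A R r n hu
  have hlayv : v ∈ layer A R r m := sel_layer A R r m hv
  have hmn : m ≤ n := by
    by_contra h
    push_neg at h
    have : v ∈ cov A R r m := by
      rw [mem_cov_iff]
      exact ⟨n, h, u, hu, hmem⟩
    exact ((sel_subset A R r m) hv).2 this
  refine ⟨hmn, ?_⟩
  rcases Nat.lt_or_ge m n with h | h
  · -- v is in a strictly earlier layer; u is not covered by v's ball
    have huv : u ∉ closedBall v (r v) := by
      intro hcon
      have : u ∈ cov A R r n := by
        rw [mem_cov_iff]
        exact ⟨m, h, v, hv, hcon⟩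
      exact ((sel_subset A R r n) hu).2 this
    rw [mem_closedBall, Real.dist_eq] at huv
    push_neg at huv
    have h1 : R / 2 ^ (m + 1) < r v := hlayv.2.1
    have h2 : R / 2 ^ n ≤ R / 2 ^ (m + 1) := by
      apply div_le_div_of_nonneg_left (le_of_lt hR) (by positivity)
      exact pow_le_pow_right₀ (by norm_num) h
    have h3 : R / 2 ^ (n + 1) < R / 2 ^ n := by
      apply div_lt_div_of_pos_left hR (by positivity)
      exact pow_lt_pow_right₀ one_lt_two (Nat.lt_succ_self n)
    calc R / 2 ^ (n + 1) < R / 2 ^ n := h3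
      _ ≤ R / 2 ^ (m + 1) := h2
      _ < r v := h1
      _ < |u - v| := huv
  · -- same layer: use the separation property
    have hnm : m = n := le_antisymm hmn h
    subst hnm
    exact (pick_spec A R r m (cov A R r m)).2.1 hu hv (fun hc => hne hc.symm)

/-! ### At most finitely many selected balls through any point -/

lemma two_halves (n : ℕ) : R / 2 ^ (n + 1) + R / 2 ^ (n + 1) = R / 2 ^ n := by
  rw [pow_succ]
  field_simp
  ring

lemma scale_mono {m n : ℕ} (hR : 0 < R) (h : m ≤ n) : R / 2 ^ (n + 1) ≤ R / 2 ^ (m + 1) := by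
  apply div_le_div_of_nonneg_left (le_of_lt hR) (by positivity)
  exact pow_le_pow_right₀ (by norm_num) (by omega)

lemma core_left (hR : 0 < R) {u v w z : ℝ}
    (hu : u ∈ GG A R r) (hv : v ∈ GG A R r) (hw : w ∈ GG A R r)
    (h1 : u < v) (h2 : v < w) (h3 : w ≤ z)
    (hzu : z ∈ closedBall u (r u)) (hzv : z ∈ closedBall v (r v))
    (hzw : z ∈ closedBall w (r w)) : False := by
  obtain ⟨nu, hnu⟩ := Set.mem_iUnion.1 hu
  obtain ⟨nv, hnv⟩ := Set.mem_iUnion.1 hv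
  obtain ⟨nw, hnw⟩ := Set.mem_iUnion.1 hw
  rw [mem_cb] at hzu hzv hzw
  have hvu : v ∈ closedBall u (r u) := by
    rw [mem_cb]; constructor <;> nlinarith [hzu.1, hzu.2]
  have hwv : w ∈ closedBall v (r v) := by
    rw [mem_cb]; constructor <;> nlinarith [hzv.1, hzv.2]
  obtain ⟨hle1, hsep1⟩ := sep_of_mem A R r hR hnu hnv hvu (ne_of_gt h1)
  obtain ⟨hle2, hsep2⟩ := sep_of_mem A R r hR hnv hnw hwv (ne_of_gt h2)
  have hmono : R / 2 ^ (nu + 1) ≤ R / 2 ^ (nv + 1) := scale_mono R hR hle1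
  have hru : r u ≤ R / 2 ^ nu := (sel_layer A R r nu hnu).2.2
  have habs1 : |u - v| = v - u := by rw [abs_sub_comm]; exact abs_of_pos (by linarith)
  have habs2 : |v - w| = w - v := by rw [abs_sub_comm]; exact abs_of_pos (by linarith)
  rw [habs1] at hsep1
  rw [habs2] at hsep2
  have := two_halves R nu
  nlinarith [hzu.2]

lemma core_right (hR : 0 < R) {u v w z : ℝ}
    (hu : u ∈ GG A R r) (hv : v ∈ GG A R r) (hw : w ∈ GG A R r)
    (h1 : v < u) (h2 : w < v) (h3 : z ≤ w)
    (hzu : z ∈ closedBall u (r u)) (hzv : z ∈ closedBall v (r v))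
    (hzw : z ∈ closedBall w (r w)) : False := by
  obtain ⟨nu, hnu⟩ := Set.mem_iUnion.1 hu
  obtain ⟨nv, hnv⟩ := Set.mem_iUnion.1 hv
  obtain ⟨nw, hnw⟩ := Set.mem_iUnion.1 hw
  rw [mem_cb] at hzu hzv hzw
  have hvu : v ∈ closedBall u (r u) := by
    rw [mem_cb]; constructor <;> nlinarith [hzu.1, hzu.2]
  have hwv : w ∈ closedBall v (r v) := by
    rw [mem_cb]; constructor <;> nlinarith [hzv.1, hzv.2]
  obtain ⟨hle1, hsep1⟩ := sep_of_mem A R r hR hnu hnv hvu (ne_of_lt h1)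
  obtain ⟨hle2, hsep2⟩ := sep_of_mem A R r hR hnv hnw hwv (ne_of_lt h2)
  have hmono : R / 2 ^ (nu + 1) ≤ R / 2 ^ (nv + 1) := scale_mono R hR hle1
  have hru : r u ≤ R / 2 ^ nu := (sel_layer A R r nu hnu).2.2
  have habs1 : |u - v| = u - v := abs_of_pos (by linarith)
  have habs2 : |v - w| = v - w := abs_of_pos (by linarith)
  rw [habs1] at hsep1
  rw [habs2] at hsep2
  have := two_halves R nu
  nlinarith [hzu.1]

lemma three_sort {P : ℝ → Prop} {a b c : ℝ} (ha : P a) (hb : P b) (hc : P c)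
    (hab : a ≠ b) (hac : a ≠ c) (hbc : b ≠ c) :
    ∃ u v w, P u ∧ P v ∧ P w ∧ u < v ∧ v < w := by
  rcases lt_trichotomy a b with h1 | h1 | h1
  · rcases lt_trichotomy b c with h2 | h2 | h2
    · exact ⟨a, b, c, ha, hb, hc, h1, h2⟩
    · exact absurd h2 hbc
    · rcases lt_trichotomy a c with h3 | h3 | h3
      · exact ⟨a, c, b, ha, hc, hb, h3, h2⟩
      · exact absurd h3 hac
      · exact ⟨c, a, b, hc, ha, hb, h3, h1⟩
  · exact absurd h1 hab
  · rcases lt_trichotomy a c with h2 | h2 | h2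
    · exact ⟨b, a, c, hb, ha, hc, h1, h2⟩
    · exact absurd h2 hac
    · rcases lt_trichotomy b c with h3 | h3 | h3
      · exact ⟨b, c, a, hb, hc, ha, h3, h2⟩
      · exact absurd h3 hbc
      · exact ⟨c, b, a, hc, hb, ha, h3, h1⟩

lemma finite_of_no_three {S : Set ℝ}
    (h : ∀ a b c, a ∈ S → b ∈ S → c ∈ S → a < b → b < c → False) : S.Finite := by
  by_cases hex : ∃ a b, a ∈ S ∧ b ∈ S ∧ a ≠ b
  · obtain ⟨a, b, ha, hb, hab⟩ := hex
    have hsub : S ⊆ {a, b} := by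
      intro c hcS
      by_contra hc
      simp only [Set.mem_insert_iff, Set.mem_singleton_iff] at hc
      push_neg at hc
      obtain ⟨u, v, w, hu, hv, hw, h1, h2⟩ :=
        three_sort ha hb hcS hab (Ne.symm hc.1) (Ne.symm hc.2)
      exact h u v w hu hv hw h1 h2
    exact (Set.finite_singleton b |>.insert a).subset hsub
  · push_neg at hex
    apply Set.Subsingleton.finite
    intro x hx y hy
    by_contra hxy
    exact hxy (hex x y hx hy)

/-- Every point of `ℝ` lies in only finitely many balls of the selection `GG`. -/
lemma finite_cov (hR : 0 < R) (z : ℝ) :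
    {g | g ∈ GG A R r ∧ z ∈ closedBall g (r g)}.Finite := by
  have hL : {g | (g ∈ GG A R r ∧ z ∈ closedBall g (r g)) ∧ g ≤ z}.Finite := by
    apply finite_of_no_three
    intro a b c ha hb hc h1 h2
    exact core_left A R r hR ha.1.1 hb.1.1 hc.1.1 h1 h2 hc.2 ha.1.2 hb.1.2 hc.1.2
  have hRt : {g | (g ∈ GG A R r ∧ z ∈ closedBall g (r g)) ∧ z < g}.Finite := by
    apply finite_of_no_three
    intro a b c ha hb hc h1 h2
    exact core_right A R r hR hc.1.1 hb.1.1 ha.1.1 h2 h1 (le_of_lt ha.2)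
      hc.1.2 hb.1.2 ha.1.2
  have : {g | g ∈ GG A R r ∧ z ∈ closedBall g (r g)} =
      {g | (g ∈ GG A R r ∧ z ∈ closedBall g (r g)) ∧ g ≤ z} ∪
      {g | (g ∈ GG A R r ∧ z ∈ closedBall g (r g)) ∧ z < g} := by
    ext g
    simp only [Set.mem_setOf_eq, Set.mem_union]
    constructor
    · intro hg
      rcases le_or_gt g z with h | h
      · exact Or.inl ⟨hg, h⟩
      · exact Or.inr ⟨hg, h⟩
    · rintro (⟨hg, _⟩ | ⟨hg, _⟩) <;> exact hg
  rw [this]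
  exact hL.union hRt

/-! ### Finite selection and 2-coloring -/

lemma endpoints_of_not_disjoint {x y rx ry : ℝ}
    (h : ¬ Disjoint (closedBall x rx) (closedBall y ry)) :
    y - ry ≤ x + rx ∧ x - rx ≤ y + ry := by
  rw [Set.not_disjoint_iff] at h
  obtain ⟨p, hp, hq⟩ := h
  rw [mem_cb] at hp hq
  exact ⟨by linarith [hp.2, hq.1], by linarith [hp.1, hq.2]⟩

/-- A finite triangle-free family of balls can be split into two families,
each consisting of pairwise disjoint balls. -/
lemma col : ∀ C : Finset ℝ,
    (∀ a ∈ C, ∀ b ∈ C, ∀ c ∈ C, a ≠ b → a ≠ c → b ≠ c →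
      ¬ Disjoint (closedBall a (r a)) (closedBall b (r b)) →
      ¬ Disjoint (closedBall a (r a)) (closedBall c (r c)) →
      ¬ Disjoint (closedBall b (r b)) (closedBall c (r c)) → False) →
    ∃ S : Finset ℝ, S ⊆ C ∧
      ((S : Set ℝ).Pairwise fun a b => Disjoint (closedBall a (r a)) (closedBall b (r b))) ∧
      (((C \ S : Finset ℝ) : Set ℝ).Pairwise fun a b =>
        Disjoint (closedBall a (r a)) (closedBall b (r b))) := by
  intro C
  induction C using Finset.strongInductionOn with
  | _ C ih =>
    intro htf
    classical
    rcases C.eq_empty_or_nonempty with rfl | hne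
    · exact ⟨∅, Finset.Subset.refl _, by simp, by simp⟩
    obtain ⟨g, hgC, hgmax⟩ := C.exists_max_image (fun x => x - r x) hne
    set C' := C.erase g with hC'
    have hC'ss : C' ⊂ C := Finset.erase_ssubset hgC
    have hC'sub : C' ⊆ C := Finset.erase_subset g C
    obtain ⟨S', hS'sub, hS'pair, hS'cpair⟩ := ih C' hC'ss (by
      intro a ha b hb c hc
      exact htf a (hC'sub ha) b (hC'sub hb) c (hC'sub hc))
    have hgC' : g ∉ C' := Finset.notMem_erase g C
    have hgS' : g ∉ S' := fun h => hgC' (hS'sub h)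
    -- any two distinct neighbors of g in C would form a triangle with g
    have huniq : ∀ h ∈ C', ∀ h' ∈ C', h ≠ h' →
        ¬ Disjoint (closedBall h (r h)) (closedBall g (r g)) →
        ¬ Disjoint (closedBall h' (r h')) (closedBall g (r g)) → False := by
      intro h hh h' hh' hne' hnd hnd'
      have hgh := endpoints_of_not_disjoint hnd
      have hgh' := endpoints_of_not_disjoint hnd'
      have hmax1 : h - r h ≤ g - r g := hgmax h (hC'sub hh)
      have hmax2 : h' - r h' ≤ g - r g := hgmax h' (hC'sub hh')
      have hcommon : ¬ Disjoint (closedBall h (r h)) (closedBall h' (r h')) := by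
        rw [Set.not_disjoint_iff]
        refine ⟨g - r g, ?_, ?_⟩ <;> rw [mem_cb]
        · exact ⟨hmax1, by linarith [hgh.1]⟩
        · exact ⟨hmax2, by linarith [hgh'.1]⟩
      exact htf h (hC'sub hh) h' (hC'sub hh') g hgC hne'
        (fun hc => hgC' (hc ▸ hh)) (fun hc => hgC' (hc ▸ hh')) hcommon hnd hnd'
    by_cases hnb : ∃ h ∈ C', ¬ Disjoint (closedBall h (r h)) (closedBall g (r g))
    · obtain ⟨h, hhC', hhnd⟩ := hnb
      by_cases hhS : h ∈ S'
      · -- put g into the complement side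
        refine ⟨S', hS'sub.trans hC'sub, hS'pair, ?_⟩
        have hcompl : C \ S' = insert g (C' \ S') := by
          ext x
          simp only [Finset.mem_sdiff, Finset.mem_insert, Finset.mem_erase, hC']
          constructor
          · rintro ⟨hxC, hxS⟩
            by_cases hxg : x = g
            · exact Or.inl hxg
            · exact Or.inr ⟨⟨hxg, hxC⟩, hxS⟩
          · rintro (rfl | ⟨⟨hxg, hxC⟩, hxS⟩)
            · exact ⟨hgC, hgS'⟩
            · exact ⟨hxC, hxS⟩
        rw [hcompl, Finset.coe_insert, Set.pairwise_insert]
        refine ⟨hS'cpair, ?_⟩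
        intro b hb hbg
        rw [Finset.mem_coe, Finset.mem_sdiff] at hb
        have hbh : b ≠ h := fun hc => (hc ▸ hb.2) hhS
        have hdisj : Disjoint (closedBall b (r b)) (closedBall g (r g)) := by
          by_contra hc
          exact huniq b hb.1 h hhC' hbh hc hhnd
        exact ⟨hdisj.symm, hdisj⟩
      · -- put g into S'
        refine ⟨insert g S', Finset.insert_subset hgC (hS'sub.trans hC'sub), ?_, ?_⟩
        · rw [Finset.coe_insert, Set.pairwise_insert]
          refine ⟨hS'pair, ?_⟩
          intro b hb hbg
          rw [Finset.mem_coe] at hb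
          have hbh : b ≠ h := fun hc => hhS (hc ▸ hb)
          have hdisj : Disjoint (closedBall b (r b)) (closedBall g (r g)) := by
            by_contra hc
            exact huniq b (hS'sub hb) h hhC' hbh hc hhnd
          exact ⟨hdisj.symm, hdisj⟩
        · have hcompl : C \ insert g S' = C' \ S' := by
            ext x
            simp only [Finset.mem_sdiff, Finset.mem_insert, Finset.mem_erase, hC']
            constructor
            · rintro ⟨hxC, hx⟩
              push_neg at hx
              exact ⟨⟨hx.1, hxC⟩, hx.2⟩
            · rintro ⟨⟨hxg, hxC⟩, hxS⟩
              exact ⟨hxC, by push_neg; exact ⟨hxg, hxS⟩⟩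
          rw [hcompl]
          exact hS'cpair
    · -- g has no neighbors at all: put it into S'
      push_neg at hnb
      refine ⟨insert g S', Finset.insert_subset hgC (hS'sub.trans hC'sub), ?_, ?_⟩
      · rw [Finset.coe_insert, Set.pairwise_insert]
        refine ⟨hS'pair, ?_⟩
        intro b hb hbg
        rw [Finset.mem_coe] at hb
        have hdisj : Disjoint (closedBall b (r b)) (closedBall g (r g)) :=
          hnb b (hS'sub hb)
        exact ⟨hdisj.symm, hdisj⟩
      · have hcompl : C \ insert g S' = C' \ S' := by
          ext x
          simp only [Finset.mem_sdiff, Finset.mem_insert, Finset.mem_erase, hC']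
          constructor
          · rintro ⟨hxC, hx⟩
            push_neg at hx
            exact ⟨⟨hx.1, hxC⟩, hx.2⟩
          · rintro ⟨⟨hxg, hxC⟩, hxS⟩
            exact ⟨hxC, by push_neg; exact ⟨hxg, hxS⟩⟩
        rw [hcompl]
        exact hS'cpair

/-- From any finite family of balls covering a finite set of targets one can choose
two subfamilies, each pairwise disjoint, which together still cover the targets. -/
lemma finite_select : ∀ C : Finset ℝ, ∀ T : Finset ℝ,
    (∀ a ∈ T, ∃ g ∈ C, a ∈ closedBall g (r g)) →
    ∃ S₁ S₂ : Finset ℝ, S₁ ⊆ C ∧ S₂ ⊆ C ∧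
      ((S₁ : Set ℝ).Pairwise fun a b => Disjoint (closedBall a (r a)) (closedBall b (r b))) ∧
      ((S₂ : Set ℝ).Pairwise fun a b => Disjoint (closedBall a (r a)) (closedBall b (r b))) ∧
      ∀ a ∈ T, ∃ g, (g ∈ S₁ ∨ g ∈ S₂) ∧ a ∈ closedBall g (r g) := by
  intro C
  induction C using Finset.strongInductionOn with
  | _ C ih =>
    intro T hcov
    classical
    by_cases htri : ∃ a ∈ C, ∃ b ∈ C, ∃ c ∈ C, a ≠ b ∧ a ≠ c ∧ b ≠ c ∧
      ¬ Disjoint (closedBall a (r a)) (closedBall b (r b)) ∧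
      ¬ Disjoint (closedBall a (r a)) (closedBall c (r c)) ∧
      ¬ Disjoint (closedBall b (r b)) (closedBall c (r c))
    · obtain ⟨a, ha, b, hb, c, hc, hab, hac, hbc, hdab, hdac, hdbc⟩ := htri
      have eab := endpoints_of_not_disjoint hdab
      have eac := endpoints_of_not_disjoint hdac
      have ebc := endpoints_of_not_disjoint hdbc
      have htri' := tri (a := a) (b := b) (c := c) (ra := r a) (rb := r b) (rc := r c)
        ⟨eab.1, eab.2⟩ ⟨eac.1, eac.2⟩ ⟨ebc.1, ebc.2⟩
      -- in each case, remove the middle ball and recurse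
      rcases htri' with hmid | hmid | hmid
      · -- ball a ⊆ ball b ∪ ball c
        refine ?_
        have hss : C.erase a ⊂ C := Finset.erase_ssubset ha
        have hcov' : ∀ t ∈ T, ∃ g ∈ C.erase a, t ∈ closedBall g (r g) := by
          intro t ht
          obtain ⟨g, hg, htg⟩ := hcov t ht
          by_cases hga : g = a
          · subst hga
            rcases hmid htg with h | h
            · exact ⟨b, Finset.mem_erase.2 ⟨Ne.symm hab, hb⟩, h⟩
            · exact ⟨c, Finset.mem_erase.2 ⟨Ne.symm hac, hc⟩, h⟩
          · exact ⟨g, Finset.mem_erase.2 ⟨hga, hg⟩, htg⟩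
        obtain ⟨S₁, S₂, h1, h2, h3, h4, h5⟩ := ih (C.erase a) hss T hcov'
        exact ⟨S₁, S₂, h1.trans (Finset.erase_subset _ _), h2.trans (Finset.erase_subset _ _),
          h3, h4, h5⟩
      · -- ball b ⊆ ball a ∪ ball c
        have hss : C.erase b ⊂ C := Finset.erase_ssubset hb
        have hcov' : ∀ t ∈ T, ∃ g ∈ C.erase b, t ∈ closedBall g (r g) := by
          intro t ht
          obtain ⟨g, hg, htg⟩ := hcov t ht
          by_cases hgb : g = b
          · subst hgb
            rcases hmid htg with h | h
            · exact ⟨a, Finset.mem_erase.2 ⟨hab, ha⟩, h⟩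
            · exact ⟨c, Finset.mem_erase.2 ⟨Ne.symm hbc, hc⟩, h⟩
          · exact ⟨g, Finset.mem_erase.2 ⟨hgb, hg⟩, htg⟩
        obtain ⟨S₁, S₂, h1, h2, h3, h4, h5⟩ := ih (C.erase b) hss T hcov'
        exact ⟨S₁, S₂, h1.trans (Finset.erase_subset _ _), h2.trans (Finset.erase_subset _ _),
          h3, h4, h5⟩
      · -- ball c ⊆ ball a ∪ ball b
        have hss : C.erase c ⊂ C := Finset.erase_ssubset hc
        have hcov' : ∀ t ∈ T, ∃ g ∈ C.erase c, t ∈ closedBall g (r g) := by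
          intro t ht
          obtain ⟨g, hg, htg⟩ := hcov t ht
          by_cases hgc : g = c
          · subst hgc
            rcases hmid htg with h | h
            · exact ⟨a, Finset.mem_erase.2 ⟨hac, ha⟩, h⟩
            · exact ⟨b, Finset.mem_erase.2 ⟨hbc, hb⟩, h⟩
          · exact ⟨g, Finset.mem_erase.2 ⟨hgc, hg⟩, htg⟩
        obtain ⟨S₁, S₂, h1, h2, h3, h4, h5⟩ := ih (C.erase c) hss T hcov'
        exact ⟨S₁, S₂, h1.trans (Finset.erase_subset _ _), h2.trans (Finset.erase_subset _ _),
          h3, h4, h5⟩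
    · -- triangle-free : 2-color all of C
      push_neg at htri
      obtain ⟨S, hSsub, hSpair, hScpair⟩ := col r C (by
        intro a ha b hb c hc h1 h2 h3 h4 h5 h6
        exact h6 (htri a ha b hb c hc h1 h2 h3 h4 h5))
      refine ⟨S, C \ S, hSsub, Finset.sdiff_subset, hSpair, hScpair, ?_⟩
      intro t ht
      obtain ⟨g, hg, htg⟩ := hcov t ht
      by_cases hgS : g ∈ S
      · exact ⟨g, Or.inl hgS, htg⟩
      · exact ⟨g, Or.inr (Finset.mem_sdiff.2 ⟨hg, hgS⟩), htg⟩

/-! ### Compactness globalization -/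

theorem main (hR : 0 < R) (hr : ∀ x ∈ A, 0 < r x ∧ r x ≤ R) :
    ∃ S₁ S₂ : Set ℝ, S₁ ⊆ A ∧ S₂ ⊆ A ∧
      (S₁.Pairwise fun a b => Disjoint (closedBall a (r a)) (closedBall b (r b))) ∧
      (S₂.Pairwise fun a b => Disjoint (closedBall a (r a)) (closedBall b (r b))) ∧
      A ⊆ ⋃ x ∈ S₁ ∪ S₂, closedBall x (r x) := by
  classical
  letI : TopologicalSpace (Fin 3) := ⊥
  haveI : DiscreteTopology (Fin 3) := ⟨rfl⟩
  -- the compact space of colorings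
  let K : ℝ → Set (ℝ → Fin 3) := fun a =>
    {f | ∃ g, g ∈ GG A R r ∧ a ∈ closedBall g (r g) ∧ f g ≠ 0}
  let Q : Set (ℝ → Fin 3) := {f | ∀ g g', g ∈ GG A R r → g' ∈ GG A R r → g ≠ g' →
      ¬ Disjoint (closedBall g (r g)) (closedBall g' (r g')) → ¬(f g ≠ 0 ∧ f g = f g')}
  let t : Finset ℝ → Set (ℝ → Fin 3) := fun F => Q ∩ ⋂ a ∈ F, ⋂ (_ : a ∈ A), K a
  have hKclosed : ∀ a : ℝ, IsClosed (K a) := by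
    intro a
    have : K a = ⋃ g ∈ {g | g ∈ GG A R r ∧ a ∈ closedBall g (r g)},
        {f : ℝ → Fin 3 | f g ≠ 0} := by
      ext f
      simp only [K, Set.mem_setOf_eq, Set.mem_iUnion]
      constructor
      · rintro ⟨g, h1, h2, h3⟩; exact ⟨g, ⟨h1, h2⟩, h3⟩
      · rintro ⟨g, ⟨h1, h2⟩, h3⟩; exact ⟨g, h1, h2, h3⟩
    rw [this]
    apply (finite_cov A R r hR a).isClosed_biUnion
    intro g _
    have : {f : ℝ → Fin 3 | f g ≠ 0} = (fun f : ℝ → Fin 3 => f g) ⁻¹' ({0}ᶜ) := rfl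
    rw [this]
    exact (isClosed_discrete _).preimage (continuous_apply g)
  have hQclosed : IsClosed Q := by
    have : Q = ⋂ g, ⋂ g', ⋂ (_ : g ∈ GG A R r ∧ g' ∈ GG A R r ∧ g ≠ g' ∧
        ¬ Disjoint (closedBall g (r g)) (closedBall g' (r g'))),
        {f : ℝ → Fin 3 | ¬(f g ≠ 0 ∧ f g = f g')} := by
      ext f
      simp only [Q, Set.mem_setOf_eq, Set.mem_iInter]
      constructor
      · intro h g g' ⟨h1, h2, h3, h4⟩
        exact h g g' h1 h2 h3 h4
      · intro h g g' h1 h2 h3 h4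
        exact h g g' ⟨h1, h2, h3, h4⟩
    rw [this]
    refine isClosed_iInter fun g => isClosed_iInter fun g' => isClosed_iInter fun _ => ?_
    have : {f : ℝ → Fin 3 | ¬(f g ≠ 0 ∧ f g = f g')} =
        (fun f : ℝ → Fin 3 => (f g, f g')) ⁻¹'
          {p : Fin 3 × Fin 3 | ¬(p.1 ≠ 0 ∧ p.1 = p.2)} := rfl
    rw [this]
    exact (isClosed_discrete _).preimage ((continuous_apply g).prodMk (continuous_apply g'))
  have htclosed : ∀ F, IsClosed (t F) :=
    fun F => hQclosed.inter (isClosed_biInter fun a _ => isClosed_iInter fun _ => hKclosed a)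
  have htne : ∀ F : Finset ℝ, (t F).Nonempty := by
    intro F
    let T : Finset ℝ := F.filter (· ∈ A)
    let C : Finset ℝ := T.biUnion fun a => (finite_cov A R r hR a).toFinset
    have hCmem : ∀ g ∈ C, g ∈ GG A R r := by
      intro g hg
      obtain ⟨a, _, hga⟩ := Finset.mem_biUnion.1 hg
      exact ((finite_cov A R r hR a).mem_toFinset.1 hga).1
    have hcov : ∀ a ∈ T, ∃ g ∈ C, a ∈ closedBall g (r g) := by
      intro a ha
      have haA : a ∈ A := (Finset.mem_filter.1 ha).2
      obtain ⟨g, hgGG, hag⟩ := GG_covers A R r hR hr haA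
      refine ⟨g, Finset.mem_biUnion.2 ⟨a, ha, ?_⟩, hag⟩
      exact (finite_cov A R r hR a).mem_toFinset.2 ⟨hgGG, hag⟩
    obtain ⟨S₁, S₂, hS₁C, hS₂C, hS₁p, hS₂p, hScov⟩ := finite_select r C T hcov
    refine ⟨fun x => if x ∈ S₁ then 1 else if x ∈ S₂ then 2 else 0, ?_, ?_⟩
    · -- the coloring respects all disjointness constraints
      intro g g' _ _ hne hnd ⟨hne0, heq⟩
      replace hne0 : (if g ∈ S₁ then (1 : Fin 3) else if g ∈ S₂ then 2 else 0) ≠ 0 := hne0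
      replace heq : (if g ∈ S₁ then (1 : Fin 3) else if g ∈ S₂ then 2 else 0) =
          (if g' ∈ S₁ then (1 : Fin 3) else if g' ∈ S₂ then 2 else 0) := heq
      by_cases h1 : g ∈ S₁
      · have hval : (if g ∈ S₁ then (1 : Fin 3) else if g ∈ S₂ then 2 else 0) = 1 := if_pos h1
        rw [hval] at heq
        by_cases h1' : g' ∈ S₁
        · exact hnd (hS₁p h1 h1' hne)
        · rw [if_neg h1'] at heq
          by_cases h2' : g' ∈ S₂
          · rw [if_pos h2'] at heq; exact absurd heq (by decide)
          · rw [if_neg h2'] at heq; exact absurd heq (by decide)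
      · rw [if_neg h1] at heq hne0
        by_cases h2 : g ∈ S₂
        · rw [if_pos h2] at heq
          by_cases h1' : g' ∈ S₁
          · rw [if_pos h1'] at heq; exact absurd heq (by decide)
          · rw [if_neg h1'] at heq
            by_cases h2' : g' ∈ S₂
            · exact hnd (hS₂p h2 h2' hne)
            · rw [if_neg h2'] at heq; exact absurd heq (by decide)
        · rw [if_neg h2] at hne0; exact hne0 rfl
    · -- all required cover conditions hold
      simp only [Set.mem_iInter]
      intro a haF haA
      have haT : a ∈ T := Finset.mem_filter.2 ⟨haF, haA⟩
      obtain ⟨g, hgS, hag⟩ := hScov a haT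
      have hgGG : g ∈ GG A R r := by
        rcases hgS with h | h
        · exact hCmem g (hS₁C h)
        · exact hCmem g (hS₂C h)
      refine ⟨g, hgGG, hag, ?_⟩
      show (if g ∈ S₁ then (1 : Fin 3) else if g ∈ S₂ then 2 else 0) ≠ 0
      rcases hgS with h | h
      · rw [if_pos h]; decide
      · by_cases h1 : g ∈ S₁
        · rw [if_pos h1]; decide
        · rw [if_neg h1, if_pos h]; decide
  have htdir : Directed (· ⊇ ·) t := by
    intro F F'
    refine ⟨F ∪ F', ?_, ?_⟩ <;>
    · intro f hf
      refine ⟨hf.1, ?_⟩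
      have h2 := hf.2
      simp only [Set.mem_iInter] at h2 ⊢
      intro a ha haA
      exact h2 a (by simp [Finset.mem_union, ha]) haA
  obtain ⟨f, hf⟩ := IsCompact.nonempty_iInter_of_directed_nonempty_isCompact_isClosed
    t htdir htne (fun F => (htclosed F).isCompact) htclosed
  have hfQ : f ∈ Q := (Set.mem_iInter.1 hf ∅).1
  have hfK : ∀ a ∈ A, f ∈ K a := by
    intro a haA
    have := (Set.mem_iInter.1 hf {a}).2
    simp only [Set.mem_iInter] at this
    exact this a (Finset.mem_singleton_self a) haA
  refine ⟨{x | x ∈ GG A R r ∧ f x = 1}, {x | x ∈ GG A R r ∧ f x = 2},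
    fun x hx => GG_subset_A A R r hx.1, fun x hx => GG_subset_A A R r hx.1, ?_, ?_, ?_⟩
  · intro x hx y hy hne
    by_contra hnd
    exact hfQ x y hx.1 hy.1 hne hnd ⟨by rw [hx.2]; decide, by rw [hx.2, hy.2]⟩
  · intro x hx y hy hne
    by_contra hnd
    exact hfQ x y hx.1 hy.1 hne hnd ⟨by rw [hx.2]; decide, by rw [hx.2, hy.2]⟩
  · intro a haA
    obtain ⟨g, hgGG, hag, hne0⟩ := hfK a haA
    have h12 : f g = 1 ∨ f g = 2 := by
      have : ∀ v : Fin 3, v ≠ 0 → v = 1 ∨ v = 2 := by decide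
      exact this _ hne0
    rw [Set.mem_iUnion₂]
    rcases h12 with h | h
    · exact ⟨g, Set.mem_union_left _ ⟨hgGG, h⟩, hag⟩
    · exact ⟨g, Set.mem_union_right _ ⟨hgGG, h⟩, hag⟩

end Besi

/-- Besicovitch covering theorem on ℝ with constant 2. -/
theorem besicovitch_covering_real
    (A : Set ℝ) (R : ℝ) (hR : 0 < R) (r : ℝ → ℝ)
    (hr : ∀ x ∈ A, 0 < r x ∧ r x ≤ R) :
    ∃ S₁ S₂ : Set ℝ, S₁ ⊆ A ∧ S₂ ⊆ A ∧
      (S₁.Pairwise fun a b => Disjoint (closedBall a (r a)) (closedBall b (r b))) ∧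
      (S₂.Pairwise fun a b => Disjoint (closedBall a (r a)) (closedBall b (r b))) ∧
      A ⊆ ⋃ x ∈ S₁ ∪ S₂, closedBall x (r x) :=
  Besi.main A R r hR hr
end
end

section
/- In Euclidean space ℝⁿ, suppose y is a common point of balls B(x_i, r_i), i = 1, ..., k, with y ≠ x_i for all i, and for all distinct i, j we have x_i ∉ B(x_j, r_j) and x_j ∉ B(x_i, r_i). Then for all distinct i, j, the angle at y between the segments y x_i and y x_j satisfies cos θ < 1/2, i.e., ⟨x_i − y, x_j − y⟩ < (1/2)‖x_i − y‖ ‖x_j − y‖. -/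
open Metric RealInnerProductSpace

lemma besicovitch_key {E : Type*} [NormedAddCommGroup E] [InnerProductSpace ℝ E]
    (a b : E) (ha : 0 < ‖a‖) (hab : ‖a‖ ≤ ‖b‖) (h : ‖b‖ < ‖a - b‖) :
    ⟪a, b⟫ < (1/2) * ‖a‖ * ‖b‖ := by
  have hsq := @norm_sub_sq_real E _ _ a b
  nlinarith [norm_nonneg (a - b), norm_nonneg b]

/-- In Euclidean space, the angle at a common point of a Besicovitch family between
two distinct centers has cosine strictly less than 1/2. -/
theorem besicovitch_angle_bound (n : ℕ) (k : ℕ)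
    (x : Fin k → EuclideanSpace ℝ (Fin n)) (r : Fin k → ℝ)
    (y : EuclideanSpace ℝ (Fin n))
    (hy : ∀ i, y ∈ closedBall (x i) (r i))
    (hne : ∀ i, y ≠ x i)
    (hsep : ∀ i j, i ≠ j → x i ∉ closedBall (x j) (r j)) :
    ∀ i j, i ≠ j →
      ⟪x i - y, x j - y⟫ < (1/2) * ‖x i - y‖ * ‖x j - y‖ := by
  intro i j hij
  have hyi : ‖x i - y‖ ≤ r i := by
    have := hy i; rw [mem_closedBall, dist_comm] at this
    simpa [dist_eq_norm] using this
  have hyj : ‖x j - y‖ ≤ r j := by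
    have := hy j; rw [mem_closedBall, dist_comm] at this
    simpa [dist_eq_norm] using this
  have hij1 : r j < ‖x i - x j‖ := by
    have := hsep i j hij; rw [mem_closedBall, not_le] at this
    simpa [dist_eq_norm] using this
  have hij2 : r i < ‖x i - x j‖ := by
    have := hsep j i hij.symm; rw [mem_closedBall, not_le, dist_comm] at this
    simpa [dist_eq_norm] using this
  have hd : x i - y - (x j - y) = x i - x j := by abel
  have hpi : 0 < ‖x i - y‖ := by
    rw [norm_pos_iff, sub_ne_zero]; exact (hne i).symm
  have hpj : 0 < ‖x j - y‖ := by
    rw [norm_pos_iff, sub_ne_zero]; exact (hne j).symm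
  rcases le_total ‖x i - y‖ ‖x j - y‖ with h | h
  · exact besicovitch_key _ _ hpi h (by rw [hd]; exact lt_of_le_of_lt hyj hij1)
  · have := besicovitch_key (x j - y) (x i - y) hpj h
      (by rw [show x j - y - (x i - y) = -(x i - x j) by abel, norm_neg]
          exact lt_of_le_of_lt hyi hij2)
    rw [real_inner_comm]
    linarith
end

section
/- In Euclidean space ℝⁿ, the weak Besicovitch covering property holds with a finite constant: there exists L = L(n) such that any finite family of closed balls {B(x_i, r_i)}_{i=1}^k with nonempty common intersection and with x_i ∉ B(x_j, r_j) for all i ≠ j satisfies k ≤ L. -/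
/-!
Project every centre different from `y` radially onto the unit sphere around `y`. If
`‖a‖ ≤ ‖b‖ ≤ ‖a - b‖`, the triangle inequality along the path from `a` to `‖a‖ • (‖b‖⁻¹ • b)`
(on the sphere of radius `‖a‖`) and then to `b` (radially) shows that `‖a‖⁻¹ • a` and `‖b‖⁻¹ • b`
are at distance at least `1`. Hence the projected centres are `1`-separated points of the unit
sphere, so there are at most Besicovitch's `multiplicity E` of them, a finite number in any
finite-dimensional normed space; and at most one centre can equal `y`.
-/

open Metric Besicovitch Finset

section Normalize

variable {E : Type*} [NormedAddCommGroup E] [NormedSpace ℝ E]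

theorem one_le_norm_inv_norm_smul_sub_of_norm_le {a b : E} (ha : a ≠ 0) (hab : ‖a‖ ≤ ‖b‖)
    (hb : ‖b‖ ≤ ‖a - b‖) : 1 ≤ ‖‖a‖⁻¹ • a - ‖b‖⁻¹ • b‖ := by
  have ha₀ : 0 < ‖a‖ := norm_pos_iff.2 ha
  have hb₀ : 0 < ‖b‖ := ha₀.trans_le hab
  set u := ‖a‖⁻¹ • a
  set v := ‖b‖⁻¹ • b
  have hdecomp : a - b = ‖a‖ • (u - v) + (‖a‖ - ‖b‖) • v := by
    rw [smul_sub, sub_smul, smul_inv_smul₀ ha₀.ne', smul_inv_smul₀ hb₀.ne']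
    abel
  have hv : ‖v‖ = 1 := norm_smul_inv_norm (norm_pos_iff.1 hb₀)
  have : ‖a - b‖ ≤ ‖a‖ * ‖u - v‖ + (‖b‖ - ‖a‖) :=
    calc ‖a - b‖ ≤ ‖‖a‖ • (u - v)‖ + ‖(‖a‖ - ‖b‖) • v‖ := hdecomp ▸ norm_add_le _ _
      _ = ‖a‖ * ‖u - v‖ + (‖b‖ - ‖a‖) := by
        rw [norm_smul, norm_smul, hv, Real.norm_of_nonneg ha₀.le, Real.norm_of_nonpos (by linarith)]
        ring
  nlinarith

theorem one_le_norm_inv_norm_smul_sub {a b : E} (ha : a ≠ 0) (hb : b ≠ 0)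
    (hab : ‖a‖ ≤ ‖a - b‖) (hba : ‖b‖ ≤ ‖a - b‖) : 1 ≤ ‖‖a‖⁻¹ • a - ‖b‖⁻¹ • b‖ := by
  rcases le_total ‖a‖ ‖b‖ with h | h
  · exact one_le_norm_inv_norm_smul_sub_of_norm_le ha h hba
  · rw [norm_sub_rev] at hab ⊢
    exact one_le_norm_inv_norm_smul_sub_of_norm_le hb h hab

end Normalize

section BesicovitchFamily

variable {ι : Type*}

section PseudoMetric

variable {X : Type*} [PseudoMetricSpace X] {x : ι → X} {r : ι → ℝ} {y : X}

theorem dist_le_dist_of_mem_closedBall_of_notMem (hy : ∀ i, y ∈ closedBall (x i) (r i))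
    (hx : Pairwise fun i j ↦ x i ∉ closedBall (x j) (r j)) {i j : ι} (hij : i ≠ j) :
    dist (x i) y ≤ dist (x i) (x j) := by
  have hyi := hy i
  have hji := hx hij.symm
  rw [mem_closedBall, dist_comm] at hyi
  rw [mem_closedBall, not_le, dist_comm] at hji
  exact hyi.trans hji.le

theorem card_filter_eq_le_one_of_mem_closedBall_of_notMem [Fintype ι] [DecidableEq X]
    (hy : ∀ i, y ∈ closedBall (x i) (r i)) (hx : Pairwise fun i j ↦ x i ∉ closedBall (x j) (r j)) :
    #{i | x i = y} ≤ 1 := by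
  refine card_le_one.2 fun i hi j hj ↦ ?_
  by_contra hij
  rw [mem_filter] at hi
  exact hx hij (hi.2 ▸ hy j)

end PseudoMetric

variable {E : Type*} [NormedAddCommGroup E] [NormedSpace ℝ E] {x : ι → E} {r : ι → ℝ} {y : E}

theorem one_le_norm_inv_norm_smul_sub_of_mem_closedBall_of_notMem
    (hy : ∀ i, y ∈ closedBall (x i) (r i)) (hx : Pairwise fun i j ↦ x i ∉ closedBall (x j) (r j))
    {i j : ι} (hij : i ≠ j) (hi : x i ≠ y) (hj : x j ≠ y) :
    1 ≤ ‖‖x i - y‖⁻¹ • (x i - y) - ‖x j - y‖⁻¹ • (x j - y)‖ := by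
  have hsub : (x i - y) - (x j - y) = x i - x j := sub_sub_sub_cancel_right _ _ _
  refine one_le_norm_inv_norm_smul_sub (sub_ne_zero.2 hi) (sub_ne_zero.2 hj) ?_ ?_
  · rw [hsub, ← dist_eq_norm, ← dist_eq_norm]
    exact dist_le_dist_of_mem_closedBall_of_notMem hy hx hij
  · rw [hsub, ← dist_eq_norm, ← dist_eq_norm, dist_comm (x i)]
    exact dist_le_dist_of_mem_closedBall_of_notMem hy hx hij.symm

theorem card_le_multiplicity_add_one_of_mem_closedBall_of_notMem [FiniteDimensional ℝ E]
    [Fintype ι] (hy : ∀ i, y ∈ closedBall (x i) (r i))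
    (hx : Pairwise fun i j ↦ x i ∉ closedBall (x j) (r j)) :
    Fintype.card ι ≤ multiplicity E + 1 := by
  classical
  set u : ι → E := fun i ↦ ‖x i - y‖⁻¹ • (x i - y)
  set S : Finset ι := {i | x i ≠ y}
  have hsep : ∀ i ∈ S, ∀ j ∈ S, i ≠ j → 1 ≤ ‖u i - u j‖ := fun i hi j hj hij ↦
    one_le_norm_inv_norm_smul_sub_of_mem_closedBall_of_notMem hy hx hij
      (mem_filter.1 hi).2 (mem_filter.1 hj).2
  have hinj : Set.InjOn u S := fun i hi j hj huij ↦ by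
    by_contra hij
    have := hsep i hi j hj hij
    rw [huij, sub_self, norm_zero] at this
    linarith
  have hS : #S ≤ multiplicity E := by
    rw [← card_image_of_injOn hinj]
    refine card_le_multiplicity (fun c hc ↦ ?_) fun c hc d hd hcd ↦ ?_
    · obtain ⟨i, hi, rfl⟩ := mem_image.1 hc
      exact (norm_smul_inv_norm (𝕜 := ℝ) (sub_ne_zero.2 (mem_filter.1 hi).2)).le.trans one_le_two
    · obtain ⟨i, hi, rfl⟩ := mem_image.1 hc
      obtain ⟨j, hj, rfl⟩ := mem_image.1 hd
      exact hsep i hi j hj fun hij ↦ hcd (hij ▸ rfl)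
  have hcard : #{i | x i = y} + #S = Fintype.card ι := card_filter_add_card_filter_not _
  have hcentre := card_filter_eq_le_one_of_mem_closedBall_of_notMem hy hx
  omega

end BesicovitchFamily

/-- The weak Besicovitch covering property holds in ℝⁿ with a finite dimensional
constant L(n). -/
theorem wbcp_euclidean (n : ℕ) :
    ∃ L : ℕ, ∀ (k : ℕ) (x : Fin k → EuclideanSpace ℝ (Fin n)) (r : Fin k → ℝ)
      (y : EuclideanSpace ℝ (Fin n)),
      (∀ i, dist y (x i) ≤ r i) →
      (∀ i j, i ≠ j → r j < dist (x i) (x j)) →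
      k ≤ L :=
  ⟨multiplicity (EuclideanSpace ℝ (Fin n)) + 1, fun k x r y hy hx ↦ by
    simpa using card_le_multiplicity_add_one_of_mem_closedBall_of_notMem (x := x) hy
      fun i j hij ↦ (hx i j hij).not_ge⟩
end

section
/- Let (X, d) be a metric space in which every Besicovitch family has cardinality at most C₁, and let F be a collection of closed balls partitioned into generations F^i (i ∈ ℕ) such that whenever B(x, r) ∈ F^i and B(x', r') ∈ F^k with i < k, we have d(x, x') > r > r'. Then for every point y ∈ X, the set of indices i such that some ball of F^i contains y has cardinality at most C₁. -/
open Metric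

/-- If every Besicovitch family has cardinality at most C₁ and the generations F^i
satisfy the separation condition, then any point lies in balls of at most C₁
generations. -/
theorem generations_multiplicity_bound (X : Type*) [MetricSpace X] (C₁ : ℕ)
    (hWBCP : ∀ (k : ℕ) (x : Fin k → X) (r : Fin k → ℝ) (y : X),
      (∀ i, dist y (x i) ≤ r i) →
      (∀ i j, i ≠ j → r j < dist (x i) (x j)) →
      k ≤ C₁)
    (F : ℕ → Set (X × ℝ))
    (hgen : ∀ i k : ℕ, i < k → ∀ p ∈ F i, ∀ q ∈ F k,
      p.2 < dist p.1 q.1 ∧ q.2 < p.2) :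
    ∀ y : X, {i : ℕ | ∃ p ∈ F i, dist y p.1 ≤ p.2}.encard ≤ C₁ := by
  intro y
  by_contra hlt
  push_neg at hlt
  have h1 : (↑(C₁ + 1) : ℕ∞) ≤ {i : ℕ | ∃ p ∈ F i, dist y p.1 ≤ p.2}.encard := by
    exact_mod_cast Order.add_one_le_of_lt hlt
  obtain ⟨t, hts, htcard⟩ := Set.exists_subset_encard_eq h1
  have htfin : t.Finite := Set.finite_of_encard_eq_coe htcard
  have hcard : htfin.toFinset.card = C₁ + 1 := by
    have := htfin.encard_eq_coe_toFinset_card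
    rw [htcard] at this
    exact_mod_cast this.symm
  let e := htfin.toFinset.equivFinOfCardEq hcard
  -- generation index function
  let g : Fin (C₁ + 1) → ℕ := fun i => (e.symm i : ℕ)
  have hg_inj : Function.Injective g := by
    intro i j h
    have : (e.symm i : ℕ) = (e.symm j : ℕ) := h
    exact e.symm.injective (Subtype.ext this)
  have hg_mem : ∀ i, g i ∈ {i : ℕ | ∃ p ∈ F i, dist y p.1 ≤ p.2} := by
    intro i
    apply hts
    exact htfin.mem_toFinset.mp (e.symm i).2
  choose P hPF hPy using hg_mem
  have key : ∀ i j : Fin (C₁ + 1), i ≠ j → (P j).2 < dist (P i).1 (P j).1 := by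
    intro i j hij
    have hgij : g i ≠ g j := fun h => hij (hg_inj h)
    rcases lt_or_gt_of_ne hgij with h | h
    · -- g i < g j : (P i).2 < dist ∧ (P j).2 < (P i).2
      obtain ⟨h1, h2⟩ := hgen _ _ h _ (hPF i) _ (hPF j)
      exact lt_trans h2 h1
    · -- g j < g i : (P j).2 < dist (P j) (P i)
      obtain ⟨h1, _⟩ := hgen _ _ h _ (hPF j) _ (hPF i)
      rwa [dist_comm] at h1
  have := hWBCP (C₁ + 1) (fun i => (P i).1) (fun i => (P i).2) y hPy key
  omega
end

section
/- Pigeonhole lemma for directions: if 2m + 1 closed half-planes through the origin in ℝ² are given (each bounded by a line through the origin), then the plane is divided by the 2m + 1 boundary lines into at most 4m + 2 sectors, and there exists a sector of angle at least π/(2m + 1) that is contained in at least m + 1 of the half-planes. -/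
open Real Set Finset

/-!
Write each `v i` in polar form `r (cos φ, sin φ)` with `r ≥ 0`; then the direction `θ` lies in
the `i`-th half-plane as soon as `cos (θ - φ) ≥ 0`. The boundary directions `φ i + π / 2` give
`2m + 1` points of the circle `ℝ / πℤ`, so some open arc of length `π / (2m + 1)` avoids all of
them: otherwise, jumping each time to a boundary point less than `π / (2m + 1)` ahead, some
boundary point would recur within `2m + 1` jumps, after a total advance strictly between `0`
and `π`. On such an arc every `cos (θ - φ i)` has constant sign, and all signs flip under
`θ ↦ θ + π`, so the arc or its antipode lies in at least `m + 1` of the half-planes.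
-/

theorem exists_nonneg_forall_mul_cos_sub (v : ℝ × ℝ) :
    ∃ r φ : ℝ, 0 ≤ r ∧ ∀ θ, cos θ * v.1 + sin θ * v.2 = r * cos (θ - φ) := by
  set z : ℂ := ⟨v.1, v.2⟩
  refine ⟨‖z‖, z.arg, norm_nonneg z, fun θ => ?_⟩
  have hre : ‖z‖ * cos z.arg = v.1 := Complex.norm_mul_cos_arg z
  have him : ‖z‖ * sin z.arg = v.2 := Complex.norm_mul_sin_arg z
  rw [cos_sub, ← hre, ← him]
  ring

theorem ContinuousOn.nonneg_or_nonpos_of_ne_zero {f : ℝ → ℝ} {a b : ℝ}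
    (hf : ContinuousOn f (Icc a b)) (h0 : ∀ x ∈ Ioo a b, f x ≠ 0) :
    (∀ x ∈ Icc a b, 0 ≤ f x) ∨ ∀ x ∈ Icc a b, f x ≤ 0 := by
  by_contra! h
  obtain ⟨⟨x, hx, hfx⟩, y, hy, hfy⟩ := h
  rcases le_total x y with hxy | hyx
  · obtain ⟨z, hz, hfz⟩ :=
      intermediate_value_Ioo hxy (hf.mono (Icc_subset_Icc hx.1 hy.2)) ⟨hfx, hfy⟩
    exact h0 z ⟨hx.1.trans_lt hz.1, hz.2.trans_le hy.2⟩ hfz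
  · obtain ⟨z, hz, hfz⟩ :=
      intermediate_value_Ioo' hyx (hf.mono (Icc_subset_Icc hy.1 hx.2)) ⟨hfx, hfy⟩
    exact h0 z ⟨hy.1.trans_lt hz.1, hz.2.trans_le hx.2⟩ hfz

theorem mem_Ioo_add_mul_of_forall_mem_Ioo_succ {u : ℕ → ℝ} {d : ℝ}
    (hu : ∀ t, u (t + 1) ∈ Ioo (u t) (u t + d)) {a b : ℕ} (hab : a < b) :
    u b ∈ Ioo (u a) (u a + (b - a) * d) := by
  induction b, hab using Nat.le_induction with
  | base => simpa using hu a
  | succ b _ ih =>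
    obtain ⟨h₁, h₂⟩ := hu b
    push_cast
    constructor <;> linarith [ih.1, ih.2]

theorem exists_Ioo_forall_add_int_mul_notMem {n : ℕ} (hn : 0 < n) {p : ℝ} (hp : 0 < p)
    (x : Fin n → ℝ) : ∃ α, ∀ i (k : ℤ), x i + k * p ∉ Ioo α (α + p / n) := by
  by_contra! h
  choose s c hs using h
  -- `G α` is a point `x i + k p` less than `p / n` ahead of `α`; two of the first `n + 1` points
  -- of the orbit of `0` under `G` are then translates of the same `x i`.
  let G : ℝ → ℝ := fun α => x (s α) + c α * p
  obtain ⟨a, b, hne, hab⟩ :=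
    Fintype.exists_ne_map_eq_of_card_lt (fun t : Fin (n + 1) => s (G^[t] 0)) (by simp)
  wlog hlt : a < b generalizing a b
  · exact this b a hne.symm hab.symm (lt_of_le_of_ne (not_lt.1 hlt) hne.symm)
  have horbit := mem_Ioo_add_mul_of_forall_mem_Ioo_succ (u := fun t => G^[t] 0) (d := p / n)
    (fun t => by simpa only [Function.iterate_succ_apply'] using hs _) (Nat.succ_lt_succ hlt)
  simp only [Function.iterate_succ_apply'] at horbit
  set A := G^[a] 0
  set B := G^[b] 0
  have hBA : G B - G A = (c B - c A : ℤ) * p := by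
    simp only [G, hab]; push_cast; ring
  have hadvance : (((b : ℕ).succ : ℝ) - ((a : ℕ).succ : ℝ)) * (p / n) ≤ p := by
    have hb : ((b : ℕ).succ : ℝ) ≤ n + 1 := by exact_mod_cast b.isLt
    have hn' : (0 : ℝ) < n := by exact_mod_cast hn
    calc (((b : ℕ).succ : ℝ) - ((a : ℕ).succ : ℝ)) * (p / n) ≤ n * (p / n) := by
          gcongr
          push_cast at hb ⊢
          linarith [(Nat.cast_nonneg (a : ℕ) : (0 : ℝ) ≤ a)]
      _ = p := mul_div_cancel₀ p hn'.ne'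
  have h₀ : 0 < ((c B - c A : ℤ) : ℝ) * p := by rw [← hBA]; linarith [horbit.1]
  have h₁ : ((c B - c A : ℤ) : ℝ) * p < 1 * p := by rw [← hBA]; linarith [horbit.2]
  have : (0 : ℤ) < c B - c A := by exact_mod_cast pos_of_mul_pos_left h₀ hp.le
  have : c B - c A < 1 := by exact_mod_cast lt_of_mul_lt_mul_right h₁ hp.le
  omega

theorem exists_Icc_forall_cos_sub_nonneg {n : ℕ} (hn : 0 < n) (φ : Fin n → ℝ) :
    ∃ θ₀, ∃ T : Finset (Fin n), n ≤ 2 * #T ∧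
      ∀ θ ∈ Icc θ₀ (θ₀ + π / n), ∀ i ∈ T, 0 ≤ cos (θ - φ i) := by
  obtain ⟨α, hα⟩ := exists_Ioo_forall_add_int_mul_notMem hn pi_pos (fun i => φ i + π / 2)
  have hsign (i : Fin n) : (∀ θ ∈ Icc α (α + π / n), 0 ≤ cos (θ - φ i)) ∨
      ∀ θ ∈ Icc α (α + π / n), cos (θ - φ i) ≤ 0 := by
    refine ContinuousOn.nonneg_or_nonpos_of_ne_zero (by fun_prop) fun θ hθ hcos => ?_
    obtain ⟨k, hk⟩ := cos_eq_zero_iff.1 hcos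
    exact hα i k (by convert hθ using 1; linarith)
  classical
  let Tpos := univ.filter fun i => ∀ θ ∈ Icc α (α + π / n), 0 ≤ cos (θ - φ i)
  let Tneg := univ.filter fun i => ∀ θ ∈ Icc α (α + π / n), cos (θ - φ i) ≤ 0
  have hcard : n ≤ #Tpos + #Tneg :=
    calc n = #(univ : Finset (Fin n)) := by simp
      _ ≤ #(Tpos ∪ Tneg) := card_le_card fun i _ => by simpa [Tpos, Tneg] using hsign i
      _ ≤ #Tpos + #Tneg := card_union_le _ _
  by_cases hpos : n ≤ 2 * #Tpos
  · exact ⟨α, Tpos, hpos, fun θ hθ i hi => (mem_filter.1 hi).2 θ hθ⟩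
  · refine ⟨α + π, Tneg, by omega, fun θ hθ i hi => ?_⟩
    have := (mem_filter.1 hi).2 (θ - π) ⟨by linarith [hθ.1], by linarith [hθ.2]⟩
    rw [show θ - φ i = θ - π - φ i + π by ring, cos_add_pi]
    linarith

theorem halfplane_pigeonhole_general (m : ℕ) (v : Fin (2*m+1) → ℝ × ℝ) :
    ∃ θ₀ δ : ℝ, Real.pi / (2*(m:ℝ)+1) ≤ δ ∧
      ∃ T : Finset (Fin (2*m+1)), m + 1 ≤ T.card ∧
        ∀ θ ∈ Set.Icc θ₀ (θ₀ + δ), ∀ i ∈ T,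
          0 ≤ Real.cos θ * (v i).1 + Real.sin θ * (v i).2 := by
  choose r φ hr hpolar using fun i => exists_nonneg_forall_mul_cos_sub (v i)
  obtain ⟨θ₀, T, hT, hcos⟩ := exists_Icc_forall_cos_sub_nonneg (Nat.succ_pos (2 * m)) φ
  refine ⟨θ₀, π / (2 * m + 1), le_rfl, T, by omega, fun θ hθ i hi => ?_⟩
  rw [hpolar]
  exact mul_nonneg (hr i) (hcos θ (by exact_mod_cast hθ) i hi)

/-- Pigeonhole lemma for directions: among 2m+1 closed half-planes through the
origin in ℝ², there is a sector of angle at least π/(2m+1) contained in at least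
m+1 of the half-planes. -/
theorem halfplane_pigeonhole (m : ℕ) (v : Fin (2*m+1) → ℝ × ℝ)
    (hv : ∀ i, (v i).1^2 + (v i).2^2 = 1) :
    ∃ θ₀ δ : ℝ, Real.pi / (2*(m:ℝ)+1) ≤ δ ∧
      ∃ T : Finset (Fin (2*m+1)), m + 1 ≤ T.card ∧
        ∀ θ ∈ Set.Icc θ₀ (θ₀ + δ), ∀ i ∈ T,
          0 ≤ Real.cos θ * (v i).1 + Real.sin θ * (v i).2 :=
  halfplane_pigeonhole_general m v
end

section
/- Let (X, d) be a metric space satisfying the contraction intersecting property with constants β ∈ (0,1), s(m) ∈ (0,1), C(m) ∈ ℕ for parameter m, and suppose there is a measure μ with inf_x μ(B(x, ρ)) > 0 for all ρ > 0. If (X, d) satisfies the weak Besicovitch covering property with constant C₁, then (X, d) satisfies the Besicovitch covering property with constant C₁ · C(C₁). -/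
open Metric Set MeasureTheory

noncomputable section
namespace CIPBCP

universe u

/-- Greedy ball package with closed balls. -/
structure Pack (β : Type u) (α : Type*) where
  c : β → α
  r : β → ℝ
  rpos : ∀ b, 0 < r b
  r_bound : ℝ
  r_le : ∀ b, r b ≤ r_bound
  τ : ℝ
  one_lt_tau : 1 < τ

namespace Pack

variable {α : Type*} [MetricSpace α] {β : Type u} [Nonempty β] (p : Pack β α)

noncomputable def index : Ordinal.{u} → β
  | i =>
      let Z := ⋃ j : { j // j < i }, closedBall (p.c (index j)) (p.r (index j))
      let R := iSup fun b : { b : β // p.c b ∉ Z } => p.r b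
      Classical.epsilon fun b : β => p.c b ∉ Z ∧ R ≤ p.τ * p.r b
  termination_by i => i
  decreasing_by exact j.2

/-- The set of points that are covered by the union of balls selected at steps `< i`. -/
def iUnionUpTo (i : Ordinal.{u}) : Set α :=
  ⋃ j : { j // j < i }, closedBall (p.c (p.index j)) (p.r (p.index j))

theorem monotone_iUnionUpTo : Monotone p.iUnionUpTo := by
  intro i j hij
  simp only [iUnionUpTo]
  exact iUnion_mono' fun r => ⟨⟨r, r.2.trans_le hij⟩, Subset.rfl⟩

/-- Supremum of the radii of balls whose centers are not yet covered at step `i`. -/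
def R (i : Ordinal.{u}) : ℝ :=
  iSup fun b : { b : β // p.c b ∉ p.iUnionUpTo i } => p.r b

theorem bddAbove_r_range (i : Ordinal.{u}) :
    BddAbove (Set.range fun b : { b : β // p.c b ∉ p.iUnionUpTo i } => p.r b) :=
  ⟨p.r_bound, by rintro - ⟨b, rfl⟩; exact p.r_le b⟩

theorem r_le_R {i : Ordinal.{u}} {b : β} (hb : p.c b ∉ p.iUnionUpTo i) : p.r b ≤ p.R i :=
  le_ciSup (p.bddAbove_r_range i) ⟨b, hb⟩

theorem index_eq (i : Ordinal.{u}) :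
    p.index i =
      Classical.epsilon fun b : β => p.c b ∉ p.iUnionUpTo i ∧ p.R i ≤ p.τ * p.r b := by
  rw [index]; rfl

/-- The first ordinal where the construction stops. -/
def lastStep : Ordinal.{u} :=
  sInf {i | ¬∃ b : β, p.c b ∉ p.iUnionUpTo i ∧ p.R i ≤ p.τ * p.r b}

theorem lastStep_nonempty :
    {i | ¬∃ b : β, p.c b ∉ p.iUnionUpTo i ∧ p.R i ≤ p.τ * p.r b}.Nonempty := by
  by_contra h
  suffices H : Function.Injective p.index from not_injective_of_ordinal p.index H
  intro x y hxy
  wlog x_le_y : x ≤ y generalizing x y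
  · exact (this hxy.symm (le_of_not_ge x_le_y)).symm
  rcases eq_or_lt_of_le x_le_y with (rfl | H); · rfl
  have hy : ∃ b : β, p.c b ∉ p.iUnionUpTo y ∧ p.R y ≤ p.τ * p.r b := by
    by_contra h'
    exact h ⟨y, h'⟩
  have A : p.c (p.index y) ∉ p.iUnionUpTo y := by
    rw [p.index_eq]
    exact (Classical.epsilon_spec hy).1
  exfalso
  apply A
  refine Set.mem_iUnion.2 ⟨⟨x, H⟩, ?_⟩
  rw [hxy]
  simpa using (p.rpos (p.index y)).le

theorem index_spec {i : Ordinal.{u}} (hi : i < p.lastStep) :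
    p.c (p.index i) ∉ p.iUnionUpTo i ∧ p.R i ≤ p.τ * p.r (p.index i) := by
  have hex : ∃ b : β, p.c b ∉ p.iUnionUpTo i ∧ p.R i ≤ p.τ * p.r b := by
    by_contra h
    have : p.lastStep ≤ i := csInf_le' h
    exact absurd hi (not_lt.2 this)
  rw [p.index_eq]
  exact Classical.epsilon_spec hex

/-- Every point is covered by chosen balls, before `p.lastStep`. -/
theorem mem_iUnionUpTo_lastStep (x : β) : p.c x ∈ p.iUnionUpTo p.lastStep := by
  have A : ∀ z : β, p.c z ∈ p.iUnionUpTo p.lastStep ∨ p.τ * p.r z < p.R p.lastStep := by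
    have : p.lastStep ∈ {i | ¬∃ b : β, p.c b ∉ p.iUnionUpTo i ∧ p.R i ≤ p.τ * p.r b} :=
      csInf_mem p.lastStep_nonempty
    simpa only [not_exists, mem_setOf_eq, not_and_or, not_le, not_notMem] using this
  by_contra h
  rcases A x with (H | H); · exact h H
  have Rpos : 0 < p.R p.lastStep :=
    lt_trans (mul_pos (lt_trans zero_lt_one p.one_lt_tau) (p.rpos x)) H
  have B : p.τ⁻¹ * p.R p.lastStep < p.R p.lastStep := by
    conv_rhs => rw [← one_mul (p.R p.lastStep)]
    exact mul_lt_mul (inv_lt_one_of_one_lt₀ p.one_lt_tau) le_rfl Rpos zero_le_one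
  obtain ⟨y, hy1, hy2⟩ :
      ∃ y : β, p.c y ∉ p.iUnionUpTo p.lastStep ∧ p.τ⁻¹ * p.R p.lastStep < p.r y := by
    have N : (Set.range fun b : { b : β // p.c b ∉ p.iUnionUpTo p.lastStep } => p.r b).Nonempty :=
      ⟨_, ⟨⟨x, h⟩, rfl⟩⟩
    have B' : p.τ⁻¹ * p.R p.lastStep <
        sSup (Set.range fun b : { b : β // p.c b ∉ p.iUnionUpTo p.lastStep } => p.r b) := B
    obtain ⟨-, ⟨⟨y, hy⟩, rfl⟩, hlt⟩ := exists_lt_of_lt_csSup N B'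
    exact ⟨y, hy, hlt⟩
  rcases A y with (Hy | Hy)
  · exact hy1 Hy
  · rw [← div_eq_inv_mul] at hy2
    have := (div_le_iff₀' (lt_trans zero_lt_one p.one_lt_tau)).1 hy2.le
    exact lt_irrefl _ (Hy.trans_le this)

/-- Strict separation: a later center is outside earlier closed balls. -/
theorem dist_gt {i j : Ordinal.{u}} (hij : i < j) (hj : j < p.lastStep) :
    p.r (p.index i) < dist (p.c (p.index i)) (p.c (p.index j)) := by
  have A : p.c (p.index j) ∉ p.iUnionUpTo j := (p.index_spec hj).1
  by_contra hcon
  push_neg at hcon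
  apply A
  refine Set.mem_iUnion.2 ⟨⟨i, hij⟩, ?_⟩
  rw [mem_closedBall, dist_comm]
  exact hcon

/-- Radius control: a later radius is at most `τ` times an earlier one. -/
theorem r_le_tau {i j : Ordinal.{u}} (hij : i < j) (hj : j < p.lastStep) :
    p.r (p.index j) ≤ p.τ * p.r (p.index i) := by
  have hi : i < p.lastStep := hij.trans hj
  have h1 : p.c (p.index j) ∉ p.iUnionUpTo i :=
    fun h => (p.index_spec hj).1 (p.monotone_iUnionUpTo hij.le h)
  exact (p.r_le_R h1).trans (p.index_spec hi).2

end Pack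
/-- Key combinatorial claim: a family of balls containing `y`, coming from a greedy
selection (strict separation + radius control), splits into at most `L.card` classes of
size at most `M`, with class leaders having strictly decreasing radii. -/
theorem claim {X : Type*} [MetricSpace X] {β₀ s' τ : ℝ} {C₁ M : ℕ}
    (hτ1 : 1 < τ) (hτβ : β₀ * τ ≤ 1) (hτs : s' * τ ≤ 1)
    (hs'0 : 0 < s') (hs'1 : s' < 1)
    (hCIPm : ∀ R : ℝ, 0 < R →
      ∀ (x : Fin (M + 1) → X) (r : Fin (M + 1) → ℝ),
        (∀ i, β₀ * R ≤ r i ∧ r i ≤ R) →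
        ∀ y : X, (∀ i, dist y (x i) ≤ r i) →
          ∃ T : Finset (Fin (M + 1)), T.card = C₁ + 1 ∧
            ∃ z : X, ∀ i ∈ T, dist z (x i) ≤ s' * r i)
    (hWBCP : ∀ (k : ℕ) (x : Fin k → X) (r : Fin k → ℝ) (y : X),
      (∀ i, dist y (x i) ≤ r i) →
      (∀ i j, i ≠ j → r j < dist (x i) (x j)) →
      k ≤ C₁)
    {ι : Type*} [LinearOrder ι] (x : ι → X) (rr : ι → ℝ) (y : X)
    (hpos : ∀ i, 0 < rr i) :
    ∀ n (I : Finset ι), I.card ≤ n →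
      (∀ i ∈ I, ∀ j ∈ I, i < j → rr i < dist (x i) (x j) ∧ rr j ≤ τ * rr i) →
      (∀ i ∈ I, dist y (x i) ≤ rr i) →
      ∃ L ⊆ I, I.card ≤ L.card * M ∧ ∀ i ∈ L, ∀ j ∈ L, i < j → rr j < rr i := by
  intro n
  induction n with
  | zero =>
    intro I hI _ _
    exact ⟨∅, Finset.empty_subset _, by simpa using hI, by simp⟩
  | succ n IH =>
    intro I hI hsep hdist
    rcases Finset.eq_empty_or_nonempty I with rfl | hne
    · exact ⟨∅, Finset.empty_subset _, by simp, by simp⟩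
    set b := I.min' hne with hbdef
    have hbI : b ∈ I := I.min'_mem hne
    set K := I.filter (fun i => β₀ * τ * rr b ≤ rr i) with hKdef
    have hbτ : β₀ * τ * rr b ≤ rr b := mul_le_of_le_one_left (hpos b).le hτβ
    have hbK : b ∈ K := Finset.mem_filter.2 ⟨hbI, hbτ⟩
    have hKI : K ⊆ I := Finset.filter_subset _ _
    -- the class of `b` has at most `M` elements
    have hKM : K.card ≤ M := by
      by_contra hcon
      push_neg at hcon
      obtain ⟨K', hK'sub, hK'card⟩ := Finset.exists_subset_card_eq hcon
      have hK'I : ∀ a : Fin (M + 1), ((K'.orderIsoOfFin hK'card a : ι)) ∈ I := fun a =>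
        hKI (hK'sub (K'.orderIsoOfFin hK'card a).2)
      set e := K'.orderIsoOfFin hK'card with hedef
      have hRpos : 0 < τ * rr b := mul_pos (lt_trans zero_lt_one hτ1) (hpos b)
      obtain ⟨T, hT, z, hz⟩ :=
        hCIPm (τ * rr b) hRpos (fun a => x (e a)) (fun a => rr (e a))
          (by
            intro a
            show β₀ * (τ * rr b) ≤ rr (e a) ∧ rr (e a) ≤ τ * rr b
            have hmemK : (e a : ι) ∈ K := hK'sub (e a).2
            have hge := (Finset.mem_filter.1 hmemK).2
            constructor
            · rw [← mul_assoc]; exact hge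
            · rcases eq_or_lt_of_le (I.min'_le _ (hK'I a)) with heq | hlt
              · rw [← heq]
                exact le_mul_of_one_le_left (hpos b).le hτ1.le
              · exact (hsep b hbI _ (hK'I a) hlt).2)
          y (fun a => hdist _ (hK'I a))
      set f := T.orderIsoOfFin hT with hfdef
      have hcontr := hWBCP (C₁ + 1) (fun a => x (e (f a))) (fun a => s' * rr (e (f a))) z
        (fun a => hz _ (f a).2)
        (by
          intro a b' hab
          have hne2 : ((e (f a) : ι)) ≠ (e (f b') : ι) := by
            intro hcoe
            exact hab (f.injective (Subtype.coe_injective (e.injective (Subtype.ext hcoe))))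
          have hIa : ((e (f a) : ι)) ∈ I := hK'I _
          have hIb : ((e (f b') : ι)) ∈ I := hK'I _
          rcases hne2.lt_or_gt with h | h
          · have h1 := hsep _ hIa _ hIb h
            calc s' * rr (e (f b')) ≤ s' * (τ * rr (e (f a))) :=
                  mul_le_mul_of_nonneg_left h1.2 hs'0.le
              _ = s' * τ * rr (e (f a)) := (mul_assoc _ _ _).symm
              _ ≤ 1 * rr (e (f a)) :=
                  mul_le_mul_of_nonneg_right hτs (hpos _).le
              _ = rr (e (f a)) := one_mul _
              _ < dist (x (e (f a))) (x (e (f b'))) := h1.1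
          · have h1 := hsep _ hIb _ hIa h
            have h2 : s' * rr (e (f b')) < rr (e (f b')) :=
              mul_lt_of_lt_one_left (hpos _) hs'1
            rw [dist_comm] at h1
            exact h2.trans h1.1)
      omega
    -- recurse on the remaining balls
    have hcardsd : (I \ K).card ≤ n := by
      have h1 : (I \ K).card = I.card - K.card := Finset.card_sdiff_of_subset hKI
      have h2 : 1 ≤ K.card := Finset.card_pos.2 ⟨b, hbK⟩
      omega
    obtain ⟨L', hL'sub, hL'card, hL'dec⟩ :=
      IH (I \ K) hcardsd
        (fun i hi j hj hij => hsep i (Finset.mem_sdiff.1 hi).1 j (Finset.mem_sdiff.1 hj).1 hij)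
        (fun i hi => hdist i (Finset.mem_sdiff.1 hi).1)
    have hbL' : b ∉ L' := fun hb => (Finset.mem_sdiff.1 (hL'sub hb)).2 hbK
    refine ⟨insert b L', ?_, ?_, ?_⟩
    · exact Finset.insert_subset hbI (hL'sub.trans (Finset.sdiff_subset))
    · rw [Finset.card_insert_of_notMem hbL']
      have h3 : (I \ K).card + K.card = I.card := Finset.card_sdiff_add_card_eq_card hKI
      have h4 : (L'.card + 1) * M = L'.card * M + M := by ring
      omega
    · intro i hi j hj hij
      rcases Finset.mem_insert.1 hi with rfl | hiL
      · rcases Finset.mem_insert.1 hj with rfl | hjL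
        · exact absurd hij (lt_irrefl _)
        · have hjI : j ∈ I := (Finset.mem_sdiff.1 (hL'sub hjL)).1
          have hjK : j ∉ K := (Finset.mem_sdiff.1 (hL'sub hjL)).2
          have : ¬ (β₀ * τ * rr b ≤ rr j) := fun hc => hjK (Finset.mem_filter.2 ⟨hjI, hc⟩)
          push_neg at this
          exact this.trans_le hbτ
      · rcases Finset.mem_insert.1 hj with rfl | hjL
        · have hiI : i ∈ I := (Finset.mem_sdiff.1 (hL'sub hiL)).1
          exact absurd (I.min'_le i hiI) (not_le.2 hij)
        · exact hL'dec i hiL j hjL hij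

/-- The full combinatorial bound: at most `C₁ * M` selected balls contain `y`. -/
theorem comb {X : Type*} [MetricSpace X] {β₀ s' τ : ℝ} {C₁ M : ℕ}
    (hτ1 : 1 < τ) (hτβ : β₀ * τ ≤ 1) (hτs : s' * τ ≤ 1)
    (hs'0 : 0 < s') (hs'1 : s' < 1)
    (hCIPm : ∀ R : ℝ, 0 < R →
      ∀ (x : Fin (M + 1) → X) (r : Fin (M + 1) → ℝ),
        (∀ i, β₀ * R ≤ r i ∧ r i ≤ R) →
        ∀ y : X, (∀ i, dist y (x i) ≤ r i) →
          ∃ T : Finset (Fin (M + 1)), T.card = C₁ + 1 ∧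
            ∃ z : X, ∀ i ∈ T, dist z (x i) ≤ s' * r i)
    (hWBCP : ∀ (k : ℕ) (x : Fin k → X) (r : Fin k → ℝ) (y : X),
      (∀ i, dist y (x i) ≤ r i) →
      (∀ i j, i ≠ j → r j < dist (x i) (x j)) →
      k ≤ C₁)
    {ι : Type*} [LinearOrder ι] (x : ι → X) (rr : ι → ℝ) (y : X)
    (hpos : ∀ i, 0 < rr i)
    (I : Finset ι)
    (hsep : ∀ i ∈ I, ∀ j ∈ I, i < j → rr i < dist (x i) (x j) ∧ rr j ≤ τ * rr i)
    (hdist : ∀ i ∈ I, dist y (x i) ≤ rr i) :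
    I.card ≤ C₁ * M := by
  obtain ⟨L, hLI, hcard, hdec⟩ :=
    claim hτ1 hτβ hτs hs'0 hs'1 hCIPm hWBCP x rr y hpos I.card I le_rfl hsep hdist
  have hL : L.card ≤ C₁ := by
    set e := L.orderIsoOfFin rfl with hedef
    apply hWBCP L.card (fun a => x (e a)) (fun a => rr (e a)) y
    · intro a
      exact hdist _ (hLI (e a).2)
    · intro a b hab
      have hne : ((e a : ι)) ≠ (e b : ι) := by
        intro hcoe
        exact hab (e.injective (Subtype.ext hcoe))
      have hIa : ((e a : ι)) ∈ I := hLI (e a).2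
      have hIb : ((e b : ι)) ∈ I := hLI (e b).2
      rcases hne.lt_or_gt with h | h
      · exact (hdec _ (e a).2 _ (e b).2 h).trans (hsep _ hIa _ hIb h).1
      · have := (hsep _ hIb _ hIa h).1
        rwa [dist_comm] at this
  calc I.card ≤ L.card * M := hcard
    _ ≤ C₁ * M := Nat.mul_le_mul_right _ hL

end CIPBCP

end

open Metric MeasureTheory

/-- In a metric space with the contraction intersecting property carrying a measure
uniformly positive on balls, WBCP with constant C₁ implies BCP with constant
C₁ · C(C₁). -/
theorem cip_wbcp_implies_bcp (X : Type*) [MetricSpace X] [MeasurableSpace X]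
    (β : ℝ) (hβ : β ∈ Set.Ioo (0:ℝ) 1)
    (s : ℕ → ℝ) (C : ℕ → ℕ) (hs : ∀ m, s m ∈ Set.Ioo (0:ℝ) 1)
    (hCIP : ∀ m : ℕ, ∀ R : ℝ, 0 < R →
      ∀ (x : Fin (C m + 1) → X) (r : Fin (C m + 1) → ℝ),
        (∀ i, β * R ≤ r i ∧ r i ≤ R) →
        ∀ y : X, (∀ i, dist y (x i) ≤ r i) →
          ∃ T : Finset (Fin (C m + 1)), T.card = m + 1 ∧
            ∃ z : X, ∀ i ∈ T, dist z (x i) ≤ s m * r i)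
    (μ : Measure X)
    (hμ : ∀ ρ : ℝ, 0 < ρ → 0 < ⨅ x : X, μ (closedBall x ρ))
    (C₁ : ℕ)
    (hWBCP : ∀ (k : ℕ) (x : Fin k → X) (r : Fin k → ℝ) (y : X),
      (∀ i, dist y (x i) ≤ r i) →
      (∀ i j, i ≠ j → r j < dist (x i) (x j)) →
      k ≤ C₁) :
    ∀ R : ℝ, 0 < R → ∀ A : Set X, Bornology.IsBounded A → ∀ r : X → ℝ,
      (∀ x ∈ A, 0 < r x ∧ r x ≤ R) →
      ∃ F' ⊆ A, (∀ y ∈ A, ∃ x ∈ F', dist y x ≤ r x) ∧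
        ∀ y : X, {x ∈ F' | dist y x ≤ r x}.encard ≤ (C₁ * C C₁ : ℕ) := by
  classical
  intro R hR A hA r hr
  rcases A.eq_empty_or_nonempty with rfl | ⟨a0, ha0⟩
  · refine ⟨∅, Set.empty_subset _, fun y hy => absurd hy (Set.notMem_empty y), fun y => ?_⟩
    have : {x ∈ (∅ : Set X) | dist y x ≤ r x} = ∅ := by ext z; simp
    simp [this]
  haveI : Nonempty ↥A := ⟨⟨a0, ha0⟩⟩
  -- the greedy parameter
  set τ : ℝ := min β⁻¹ (s C₁)⁻¹ with hτdef
  have hβ1 : (1:ℝ) < β⁻¹ := (one_lt_inv₀ hβ.1).2 hβ.2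
  have hs1 : (1:ℝ) < (s C₁)⁻¹ := (one_lt_inv₀ (hs C₁).1).2 (hs C₁).2
  have hτ1 : 1 < τ := lt_min hβ1 hs1
  have hτβ : β * τ ≤ 1 := by
    calc β * τ ≤ β * β⁻¹ := mul_le_mul_of_nonneg_left (min_le_left _ _) hβ.1.le
      _ = 1 := mul_inv_cancel₀ hβ.1.ne'
  have hτs : s C₁ * τ ≤ 1 := by
    calc s C₁ * τ ≤ s C₁ * (s C₁)⁻¹ :=
          mul_le_mul_of_nonneg_left (min_le_right _ _) (hs C₁).1.le
      _ = 1 := mul_inv_cancel₀ (hs C₁).1.ne'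
  -- the greedy package
  set p : CIPBCP.Pack ↥A X :=
    { c := Subtype.val
      r := fun b => r b
      rpos := fun b => (hr b b.2).1
      r_bound := R
      r_le := fun b => (hr b b.2).2
      τ := τ
      one_lt_tau := hτ1 } with hpdef
  set F' : Set X := (fun i => (p.index i : X)) '' Set.Iio p.lastStep with hF'def
  have hF'A : F' ⊆ A := by
    rintro - ⟨i, -, rfl⟩
    exact (p.index i).2
  refine ⟨F', hF'A, ?_, ?_⟩
  · -- covering
    intro y hy
    have hmem := p.mem_iUnionUpTo_lastStep ⟨y, hy⟩
    rw [CIPBCP.Pack.iUnionUpTo] at hmem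
    obtain ⟨⟨j, hj⟩, hmemj⟩ := Set.mem_iUnion.1 hmem
    exact ⟨(p.index j : X), ⟨j, hj, rfl⟩, hmemj⟩
  · -- bounded multiplicity
    intro y
    by_contra hcon
    push_neg at hcon
    set N : ℕ := C₁ * C C₁ with hNdef
    set S : Set X := {x ∈ F' | dist y x ≤ r x} with hSdef
    have h2 : ((N + 1 : ℕ) : ℕ∞) ≤ S.encard := by
      have := Order.add_one_le_of_lt hcon
      rwa [Nat.cast_add, Nat.cast_one]
    obtain ⟨t, hts, htc⟩ := Set.exists_subset_encard_eq h2
    have ht : t.Finite := Set.finite_of_encard_eq_coe htc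
    -- a choice of selection indices
    set f : X → Ordinal := fun x =>
      if h : ∃ i, i < p.lastStep ∧ ((p.index i : X)) = x then h.choose else 0 with hfdef
    have hf : ∀ x ∈ t, f x < p.lastStep ∧ ((p.index (f x) : X)) = x := by
      intro x hx
      have hx' : ∃ i, i < p.lastStep ∧ ((p.index i : X)) = x := by
        obtain ⟨hxF, -⟩ := hts hx
        obtain ⟨i, hi, hix⟩ := hxF
        exact ⟨i, hi, hix⟩
      simp only [f, dif_pos hx']
      exact hx'.choose_spec
    set I : Finset Ordinal := ht.toFinset.image f with hIdef
    have hIcard : I.card = N + 1 := by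
      have hinj : Set.InjOn f ht.toFinset := by
        intro x hx x' hx' hxx
        rw [ht.coe_toFinset] at hx hx'
        rw [← (hf x hx).2, ← (hf x' hx').2, hxx]
      rw [hIdef, Finset.card_image_of_injOn hinj]
      have : (ht.toFinset.card : ℕ∞) = ((N + 1 : ℕ) : ℕ∞) := by
        rw [← Set.Finite.encard_eq_coe_toFinset_card ht, htc]
      exact_mod_cast this
    have hlt : ∀ i ∈ I, i < p.lastStep := by
      intro i hi
      obtain ⟨x, hx, rfl⟩ := Finset.mem_image.1 hi
      exact (hf x (ht.mem_toFinset.1 hx)).1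
    -- apply the combinatorial bound
    have hbound := CIPBCP.comb (β₀ := β) (s' := s C₁) (τ := τ) (C₁ := C₁) (M := C C₁)
      hτ1 hτβ hτs (hs C₁).1 (hs C₁).2 (hCIP C₁) hWBCP
      (fun i => (p.index i : X)) (fun i => p.r (p.index i)) y
      (fun i => p.rpos (p.index i)) I
      (fun i hi j hj hij =>
        ⟨p.dist_gt hij (hlt j hj), p.r_le_tau hij (hlt j hj)⟩)
      ?_
    · omega
    · intro i hi
      obtain ⟨x, hx, rfl⟩ := Finset.mem_image.1 hi
      have hxt : x ∈ t := ht.mem_toFinset.1 hx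
      have hxS : x ∈ S := hts hxt
      have heq : ((p.index (f x) : X)) = x := (hf x hxt).2
      have : dist y x ≤ r x := hxS.2
      rw [← heq] at this
      exact this
end
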